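/- arXiv:2206.11371 — 9 statements merged into one kernel-verified Lean document; each statement's English description precedes it below -/
import Mathlib

section
/- Let n ≥ 3 and let a, b, d, m be positive integers with b < a and d < m, and set r = m·a and s = d·b. Then, with q = R(n;a,b) - 1, we have R(n;r,s) > A_q(m,d). -/
/-!
Let `q = R(n;a,b) - 1`, let `χ₀` be an `(a,b)`-coloring of `K_q` without monochromatic `K_n`, and
let `C ⊆ [q]^m` be a code of size `A_q(m,d)` and minimum distance `d`. Give the edge between
codewords `x ≠ y` every color `(j, c) ∈ [m] × [a]` with `x j ≠ y j` and `c ∈ χ₀ {x j, y j}`. Since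
`x` and `y` differ in at least `d` coordinates, each edge gets at least `d b` colors, and a
monochromatic `K_n` in color `(j, c)` projects injectively, under the `j`-th coordinate, onto a
`K_n` of `χ₀` in color `c`. Discarding surplus colors yields an `(m a, d b)`-coloring of
`K_{A_q(m,d)}` without monochromatic `K_n`; as the Ramsey property is monotone in the number of
vertices and (by Ramsey's theorem) eventually holds, `A_q(m,d) < R(n; m a, d b)`.
-/

/-- `χ` is an `(r,s)`-set-coloring of the complete `k`-uniform hypergraph on `Fin N`:
each `k`-element edge receives a set of exactly `s` colors from the palette `Fin r`. -/
def IsSetColoring (N k r s : ℕ) (χ : Finset (Fin N) → Finset (Fin r)) : Prop :=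
  ∀ e : Finset (Fin N), e.card = k → (χ e).card = s

/-- There is a monochromatic `n`-clique: `n` vertices all of whose `k`-element
subsets share a common color. -/
def HasMonoClique (N k n r : ℕ) (χ : Finset (Fin N) → Finset (Fin r)) : Prop :=
  ∃ S : Finset (Fin N), S.card = n ∧ ∃ c : Fin r, ∀ e ⊆ S, e.card = k → c ∈ χ e

/-- The `k`-uniform set-coloring Ramsey number `R_k(n;r,s)`. -/
noncomputable def setRamsey (k n r s : ℕ) : ℕ :=
  sInf {N | ∀ χ : Finset (Fin N) → Finset (Fin r),
    IsSetColoring N k r s χ → HasMonoClique N k n r χ}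

/-- `A_q(m,d)`: the maximum size of a `q`-ary code of length `m` with minimum
Hamming distance at least `d`. -/
noncomputable def maxCode (q m d : ℕ) : ℕ :=
  sSup {M | ∃ C : Finset (Fin m → Fin q),
    (∀ x ∈ C, ∀ y ∈ C, x ≠ y → d ≤ hammingDist x y) ∧ C.card = M}

/-- The graph on `Fin N` formed by the edges whose color set contains `i`. -/
def colorGraph (N r : ℕ) (χ : Finset (Fin N) → Finset (Fin r)) (i : Fin r) :
    SimpleGraph (Fin N) where
  Adj u v := u ≠ v ∧ i ∈ χ {u, v}
  symm := by
    constructor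
    intro u v h
    exact ⟨h.1.symm, by rw [Finset.pair_comm]; exact h.2⟩
  loopless := by constructor; intro u h; exact h.1 rfl

/-- `R'(n;r,s)`: the least `N` such that every `(r,s)`-coloring of `K_N` has a color
class with chromatic number at least `n`. -/
noncomputable def setRamsey' (n r s : ℕ) : ℕ :=
  sInf {N | ∀ χ : Finset (Fin N) → Finset (Fin r), IsSetColoring N 2 r s χ →
    ∃ i : Fin r, (n : ℕ∞) ≤ (colorGraph N r χ i).chromaticNumber}

/-- The Turán number `ex(N, K_n)`. -/
noncomputable def turanNumber (N n : ℕ) : ℕ :=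
  sSup {m | ∃ G : SimpleGraph (Fin N), G.CliqueFree n ∧ G.edgeSet.ncard = m}

open Finset

/-- Greedy step of the proof of Ramsey's theorem: `col u` is the color of every edge from `u` to a
vertex chosen after it. -/
theorem exists_subset_colored_by_endpoint {V κ : Type*} [DecidableEq V] [Fintype κ] (g : V → V → κ) :
    ∀ (t : ℕ) (S : Finset V), (Fintype.card κ + 1) ^ t ≤ #S →
      ∃ T ⊆ S, #T = t ∧ ∃ col : V → κ,
        ∀ u ∈ T, ∀ v ∈ T, u ≠ v → g u v = col u ∨ g v u = col v := by
  classical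
  intro t
  induction t with
  | zero => exact fun S _ => ⟨∅, empty_subset S, rfl, fun v => g v v, by simp⟩
  | succ t ih =>
    intro S hS
    have hpos : 1 ≤ (Fintype.card κ + 1) ^ t := Nat.one_le_pow _ _ (Nat.succ_pos _)
    obtain ⟨v, hv⟩ : S.Nonempty := card_pos.mp (by rw [pow_succ] at hS; nlinarith)
    have hfiber : #(univ : Finset κ) * (Fintype.card κ + 1) ^ t ≤ #(S.erase v) := by
      rw [card_univ, card_erase_of_mem hv]
      rw [pow_succ] at hS
      exact Nat.le_sub_one_of_lt (by nlinarith)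
    obtain ⟨c, -, hc⟩ := exists_le_card_fiber_of_mul_le_card_of_maps_to
      (fun w _ => mem_univ (g v w)) ⟨g v v, mem_univ _⟩ hfiber
    obtain ⟨T, hTS, hT, col, hcol⟩ := ih _ hc
    have hvT : v ∉ T := fun h => by simpa using hTS h
    refine ⟨insert v T, insert_subset hv fun w hw => ?_, by rw [card_insert_of_notMem hvT, hT],
      Function.update col v c, ?_⟩
    · exact mem_of_mem_erase (mem_of_mem_filter w (hTS hw))
    have hgv : ∀ w ∈ T, g v w = c := fun w hw => (mem_filter.mp (hTS hw)).2
    have hcolT : ∀ w ∈ T, Function.update col v c w = col w :=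
      fun w hw => Function.update_of_ne (ne_of_mem_of_not_mem hw hvT) _ _
    intro u hu w hw huw
    rcases mem_insert.mp hu with rfl | huT <;> rcases mem_insert.mp hw with rfl | hwT
    · exact absurd rfl huw
    · exact .inl (by rw [Function.update_self, hgv w hwT])
    · exact .inr (by rw [Function.update_self, hgv u huT])
    · rw [hcolT u huT, hcolT w hwT]; exact hcol u huT w hwT huw

theorem exists_monochromatic_of_pow_le_card {V κ : Type*} [DecidableEq V] [Fintype κ]
    (g : V → V → κ) (n : ℕ) (S : Finset V)
    (hS : (Fintype.card κ + 1) ^ (Fintype.card κ * n + 1) ≤ #S) :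
    ∃ T : Finset V, #T = n ∧ ∃ c : κ, ∀ u ∈ T, ∀ v ∈ T, u ≠ v → g u v = c ∨ g v u = c := by
  classical
  obtain ⟨T, -, hT, col, hcol⟩ := exists_subset_colored_by_endpoint g _ S hS
  obtain ⟨c, -, hc⟩ := exists_lt_card_fiber_of_mul_lt_card_of_maps_to (s := T) (n := n)
    (fun u _ => mem_univ (col u)) (by rw [card_univ, hT]; omega)
  obtain ⟨T', hT'c, hT'⟩ := exists_subset_card_eq hc.le
  refine ⟨T', hT', c, fun u hu v hv huv => ?_⟩
  obtain ⟨huT, hcu⟩ := mem_filter.mp (hT'c hu)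
  obtain ⟨hvT, hcv⟩ := mem_filter.mp (hT'c hv)
  simpa only [hcu, hcv] using hcol u huT v hvT huv

theorem hasMonoClique_two_iff {N n r : ℕ} {χ : Finset (Fin N) → Finset (Fin r)} :
    HasMonoClique N 2 n r χ ↔
      ∃ S : Finset (Fin N), #S = n ∧ ∃ c, ∀ u ∈ S, ∀ v ∈ S, u ≠ v → c ∈ χ {u, v} := by
  refine exists_congr fun S => and_congr_right fun _ => exists_congr fun c => ⟨?_, ?_⟩
  · exact fun h u hu v hv huv =>
      h _ (insert_subset hu (singleton_subset_iff.mpr hv)) (card_pair huv)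
  · intro h e he he2
    obtain ⟨u, v, huv, rfl⟩ := card_eq_two.mp he2
    exact h u (he (mem_insert_self u {v})) v (he (mem_insert_of_mem (mem_singleton_self v))) huv

/-- `setRamsey k n r s` is by definition the infimum of the `N` with `RamseyHolds N k n r s`. -/
def RamseyHolds (N k n r s : ℕ) : Prop :=
  ∀ χ : Finset (Fin N) → Finset (Fin r), IsSetColoring N k r s χ → HasMonoClique N k n r χ

theorem exists_ramseyHolds (n : ℕ) {r s : ℕ} (hr : 0 < r) (hs : 0 < s) :
    ∃ N, RamseyHolds N 2 n r s := by
  refine ⟨(r + 1) ^ (r * n + 1), fun χ hχ => ?_⟩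
  have hcolor : ∀ u v, ∃ c : Fin r, u ≠ v → c ∈ χ {u, v} := fun u v => by
    by_cases huv : u = v
    · exact ⟨⟨0, hr⟩, fun h => absurd huv h⟩
    · obtain ⟨c, hc⟩ := card_pos.mp ((hχ _ (card_pair huv)).symm ▸ hs)
      exact ⟨c, fun _ => hc⟩
  choose g hg using hcolor
  obtain ⟨T, hT, c, hc⟩ := exists_monochromatic_of_pow_le_card g n univ (by simp)
  refine hasMonoClique_two_iff.mpr ⟨T, hT, c, fun u hu v hv huv => ?_⟩
  rcases hc u hu v hv huv with h | h
  · exact h ▸ hg u v huv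
  · exact pair_comm v u ▸ h ▸ hg v u huv.symm

theorem RamseyHolds.mono {N M k n r s : ℕ} (h : RamseyHolds N k n r s) (hNM : N ≤ M) :
    RamseyHolds M k n r s := by
  intro χ hχ
  obtain ⟨S, hS, c, hc⟩ := h (fun e => χ (e.map (Fin.castLEEmb hNM)))
    (fun e he => hχ _ (by rwa [card_map]))
  refine ⟨S.map (Fin.castLEEmb hNM), by rwa [card_map], c, fun e he hek => ?_⟩
  obtain ⟨e₀, he₀, rfl⟩ := subset_map_iff.mp he
  exact hc e₀ he₀ (by rwa [card_map] at hek)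

theorem lt_setRamsey_of_not_ramseyHolds {M k n r s : ℕ} (hex : ∃ N, RamseyHolds N k n r s)
    (hM : ¬ RamseyHolds M k n r s) : M < setRamsey k n r s :=
  lt_of_not_ge fun hle => hM (RamseyHolds.mono (Nat.sInf_mem hex) hle)

theorem not_ramseyHolds_setRamsey_sub_one {n : ℕ} (hn : 0 < n) (r s : ℕ) :
    ¬ RamseyHolds (setRamsey 2 n r s - 1) 2 n r s := by
  rcases Nat.eq_zero_or_pos (setRamsey 2 n r s) with h | h
  · rw [h, Nat.zero_sub]
    intro hR
    obtain ⟨S, hS, -⟩ := hR (fun _ => ∅) (fun e he => by simp [eq_empty_of_isEmpty e] at he)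
    simp [eq_empty_of_isEmpty S] at hS
    omega
  · exact Nat.notMem_of_lt_sInf (Nat.sub_one_lt_of_lt h)

theorem not_ramseyHolds_of_le_card {N k n r s : ℕ} (χ : Finset (Fin N) → Finset (Fin r))
    (hχ : ∀ e : Finset (Fin N), #e = k → s ≤ #(χ e)) (hmono : ¬ HasMonoClique N k n r χ) :
    ¬ RamseyHolds N k n r s := by
  have hshrink : ∀ e, ∃ t ⊆ χ e, #e = k → #t = s := fun e => by
    by_cases he : #e = k
    · obtain ⟨t, ht, hts⟩ := exists_subset_card_eq (hχ e he)
      exact ⟨t, ht, fun _ => hts⟩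
    · exact ⟨∅, empty_subset _, fun h => absurd h he⟩
  choose χ' hsub hcard using hshrink
  intro hR
  obtain ⟨S, hS, c, hc⟩ := hR χ' hcard
  exact hmono ⟨S, hS, c, fun e he hek => hsub e (hc e he hek)⟩

theorem exists_code_card_eq_maxCode (q m d : ℕ) :
    ∃ C : Finset (Fin m → Fin q),
      (∀ x ∈ C, ∀ y ∈ C, x ≠ y → d ≤ hammingDist x y) ∧ #C = maxCode q m d :=
  Nat.sSup_mem (s := {M | ∃ C : Finset (Fin m → Fin q),
      (∀ x ∈ C, ∀ y ∈ C, x ≠ y → d ≤ hammingDist x y) ∧ #C = M})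
    ⟨0, ∅, by simp, rfl⟩ ⟨Fintype.card (Fin m → Fin q), fun _ ⟨C, _, hC⟩ => hC ▸ card_le_univ C⟩

/-- Colors in `Fin (m * a)` are read as pairs `(j, c)`: coordinate `j` of the code and color `c`
of `χ₀`. -/
def codeProductColoring {q a m M : ℕ} (χ₀ : Finset (Fin q) → Finset (Fin a))
    (f : Fin M → Fin m → Fin q) (e : Finset (Fin M)) : Finset (Fin (m * a)) :=
  ({p : Fin m × Fin a | ∃ u ∈ e, ∃ v ∈ e, f u p.1 ≠ f v p.1 ∧ p.2 ∈ χ₀ {f u p.1, f v p.1}} :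
    Finset _).map finProdFinEquiv.toEmbedding

section codeProductColoring

variable {q a m M : ℕ} {χ₀ : Finset (Fin q) → Finset (Fin a)} {f : Fin M → Fin m → Fin q}

theorem mem_codeProductColoring_pair {u v : Fin M} {j : Fin m} {c : Fin a} :
    finProdFinEquiv (j, c) ∈ codeProductColoring χ₀ f {u, v} ↔
      f u j ≠ f v j ∧ c ∈ χ₀ {f u j, f v j} := by
  simp only [codeProductColoring, mem_map_equiv, Equiv.symm_apply_apply, mem_filter, mem_univ,
    true_and, mem_insert, mem_singleton, exists_eq_or_imp, exists_eq_left]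
  refine ⟨?_, fun h => .inl (.inr h)⟩
  rintro ((⟨h, -⟩ | h) | (h | ⟨h, -⟩))
  · exact absurd rfl h
  · exact h
  · exact ⟨h.1.symm, pair_comm (f u j) (f v j) ▸ h.2⟩
  · exact absurd rfl h

theorem le_card_codeProductColoring {b d : ℕ} (hχ₀ : IsSetColoring q 2 a b χ₀) {u v : Fin M}
    (huv : d ≤ hammingDist (f u) (f v)) : d * b ≤ #(codeProductColoring χ₀ f {u, v}) := by
  set B : Finset (Fin m) := {j | f u j ≠ f v j}
  calc d * b ≤ ∑ j ∈ B, #(χ₀ {f u j, f v j}) := by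
        rw [sum_congr rfl fun j hj => hχ₀ _ (card_pair (mem_filter.mp hj).2), sum_const,
          smul_eq_mul]
        exact Nat.mul_le_mul_right b huv
    _ = #((B.sigma fun j => χ₀ {f u j, f v j}).map
          ((Equiv.sigmaEquivProd _ _).trans finProdFinEquiv).toEmbedding) := by
        rw [card_map, card_sigma]
    _ ≤ #(codeProductColoring χ₀ f {u, v}) := by
        refine card_le_card fun p hp => ?_
        obtain ⟨⟨j, c⟩, hjc, rfl⟩ := mem_map.mp hp
        obtain ⟨hj, hc⟩ := mem_sigma.mp hjc
        exact mem_codeProductColoring_pair.mpr ⟨(mem_filter.mp hj).2, hc⟩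

theorem HasMonoClique.of_codeProductColoring {n : ℕ}
    (h : HasMonoClique M 2 n (m * a) (codeProductColoring χ₀ f)) : HasMonoClique q 2 n a χ₀ := by
  obtain ⟨S, hS, p, hp⟩ := hasMonoClique_two_iff.mp h
  obtain ⟨⟨j, c⟩, rfl⟩ := finProdFinEquiv.surjective p
  have hclique : ∀ u ∈ S, ∀ v ∈ S, u ≠ v → f u j ≠ f v j ∧ c ∈ χ₀ {f u j, f v j} :=
    fun u hu v hv huv => mem_codeProductColoring_pair.mp (hp u hu v hv huv)
  have hinj : Set.InjOn (f · j) S := fun u hu v hv huv =>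
    by_contra fun hne => (hclique u hu v hv hne).1 huv
  refine hasMonoClique_two_iff.mpr ⟨S.image (f · j), by rwa [card_image_of_injOn hinj], c, ?_⟩
  simp only [mem_image]
  rintro _ ⟨u, hu, rfl⟩ _ ⟨v, hv, rfl⟩ huv
  exact (hclique u hu v hv fun h => huv (h ▸ rfl)).2

end codeProductColoring

theorem not_ramseyHolds_mul_of_code {q a b m d M n : ℕ} (h₀ : ¬ RamseyHolds q 2 n a b)
    (f : Fin M → Fin m → Fin q) (hf : ∀ i j, i ≠ j → d ≤ hammingDist (f i) (f j)) :
    ¬ RamseyHolds M 2 n (m * a) (d * b) := by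
  obtain ⟨χ₀, hχ₀, hmono₀⟩ : ∃ χ₀, IsSetColoring q 2 a b χ₀ ∧ ¬ HasMonoClique q 2 n a χ₀ := by
    simpa [RamseyHolds] using h₀
  refine not_ramseyHolds_of_le_card (codeProductColoring χ₀ f) (fun e he => ?_)
    (fun h => hmono₀ h.of_codeProductColoring)
  obtain ⟨u, v, huv, rfl⟩ := card_eq_two.mp he
  exact le_card_codeProductColoring hχ₀ (hf u v huv)

/-- Theorem 2: the product/code lower bound for set-coloring Ramsey numbers. -/
theorem set_ramsey_gt_maxCode (n a b d m : ℕ) (hn : 3 ≤ n) (hb : 1 ≤ b) (hba : b < a)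
    (hd : 1 ≤ d) (hdm : d < m) (r s : ℕ) (hr : r = m * a) (hs : s = d * b) :
    maxCode (setRamsey 2 n a b - 1) m d < setRamsey 2 n r s := by
  subst hr hs
  obtain ⟨C, hC, hcard⟩ := exists_code_card_eq_maxCode (setRamsey 2 n a b - 1) m d
  rw [← hcard]
  refine lt_setRamsey_of_not_ramseyHolds
    (exists_ramseyHolds n (Nat.mul_pos (by omega) (by omega)) (Nat.mul_pos hd hb)) ?_
  refine not_ramseyHolds_mul_of_code (not_ramseyHolds_setRamsey_sub_one (by omega) a b)
    (fun i => C.equivFin.symm i) fun i j hij => ?_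
  exact hC _ (coe_mem _) _ (coe_mem _)
    ((Subtype.val_injective.comp C.equivFin.symm.injective).ne hij)
end

section
/- For all integers n ≥ 3 and r > s ≥ 1, R(n;r,s) ≤ (r/(r-s)) · (r/s)^{(n-2)r+1}. -/
/-- Greedy recursion. -/
def gES (r s : ℕ) : ℕ → ℕ
  | 0 => 1
  | t + 1 => 1 + (r * (gES r s t - 1) + s) / s

lemma gES_pos (r s t : ℕ) : 1 ≤ gES r s t := by
  cases t with
  | zero => simp [gES]
  | succ t => simp [gES]

lemma ceil_helper {s : ℕ} (hs : 0 < s) (m : ℕ) : m ≤ s * ((m + s - 1) / s) := by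
  have h1 := Nat.div_add_mod (m + s - 1) s
  have h2 := Nat.mod_lt (m + s - 1) hs
  omega

/-- Pigeonhole: there is a color `c` seen on at least `m` edges from `v0` into `D`. -/
lemma exists_color {N r s : ℕ} (hr : 0 < r) (hs : 0 < s)
    (χ : Finset (Fin N) → Finset (Fin r)) (hχ : IsSetColoring N 2 r s χ)
    (v0 : Fin N) (D : Finset (Fin N)) (hv0 : v0 ∉ D) (m : ℕ) (hm : 1 ≤ m)
    (hD : r * (m - 1) + 1 ≤ s * D.card) :
    ∃ c : Fin r, m ≤ (D.filter (fun w => c ∈ χ {v0, w})).card := by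
  by_contra hcon
  push_neg at hcon
  have hsum : ∑ c : Fin r, (D.filter (fun w => c ∈ χ {v0, w})).card
      = ∑ w ∈ D, (χ {v0, w}).card := by
    simp only [Finset.card_filter]
    rw [Finset.sum_comm]
    refine Finset.sum_congr rfl fun w _ => ?_
    rw [Finset.sum_ite_mem, Finset.univ_inter, Finset.sum_const, smul_eq_mul, mul_one]
  have hval : ∑ w ∈ D, (χ {v0, w}).card = s * D.card := by
    rw [Finset.sum_congr rfl fun w hw => hχ {v0, w}
      (Finset.card_pair (fun h => hv0 (h ▸ hw)))]
    simp [Finset.sum_const, mul_comm]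
  have hub : ∑ c : Fin r, (D.filter (fun w => c ∈ χ {v0, w})).card ≤ r * (m - 1) := by
    calc ∑ c : Fin r, (D.filter (fun w => c ∈ χ {v0, w})).card
        ≤ ∑ _c : Fin r, (m - 1) := Finset.sum_le_sum fun c _ => by
          have := hcon c; omega
      _ = r * (m - 1) := by simp [Finset.sum_const, mul_comm]
  rw [hsum, hval] at hub
  omega

/-- The greedy sequence lemma. -/
lemma seq_lemma {N r s : ℕ} (hr : 0 < r) (hs : 0 < s)
    (χ : Finset (Fin N) → Finset (Fin r)) (hχ : IsSetColoring N 2 r s χ) :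
    ∀ (t : ℕ) (A : Finset (Fin N)), gES r s t ≤ A.card →
    ∃ (v : Fin t → Fin N) (c : Fin t → Fin r) (w : Fin N),
      w ∈ A ∧ (∀ i, v i ∈ A) ∧ (∀ i, v i ≠ w) ∧
      (∀ i j : Fin t, i < j → v i ≠ v j ∧ c i ∈ χ {v i, v j}) ∧
      (∀ i, c i ∈ χ {v i, w}) := by
  intro t
  induction t with
  | zero =>
    intro A hA
    obtain ⟨w, hw⟩ := Finset.card_pos.mp (by simpa [gES] using hA)
    exact ⟨Fin.elim0, Fin.elim0, w, hw, fun i => i.elim0, fun i => i.elim0,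
      fun i => i.elim0, fun i => i.elim0⟩
  | succ t ih =>
    intro A hA
    have h1 : 1 ≤ A.card := le_trans (gES_pos r s (t+1)) hA
    obtain ⟨v0, hv0⟩ := Finset.card_pos.mp (show 0 < A.card by omega)
    set D := A.erase v0 with hDdef
    have hg : gES r s (t + 1) = 1 + (r * (gES r s t - 1) + s) / s := rfl
    have hDcard : (r * (gES r s t - 1) + s) / s ≤ D.card := by
      have hce := Finset.card_erase_of_mem hv0
      rw [← hDdef] at hce
      omega
    have hv0D : v0 ∉ D := Finset.notMem_erase v0 A
    have hkey : r * (gES r s t - 1) + 1 ≤ s * D.card := by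
      have hq : r * (gES r s t - 1) + 1 ≤ s * ((r * (gES r s t - 1) + s) / s) := by
        have := ceil_helper hs (r * (gES r s t - 1) + 1)
        have he : r * (gES r s t - 1) + 1 + s - 1 = r * (gES r s t - 1) + s := by omega
        rwa [he] at this
      exact le_trans hq (Nat.mul_le_mul_left s hDcard)
    obtain ⟨c0, hc0⟩ := exists_color hr hs χ hχ v0 D hv0D (gES r s t) (gES_pos r s t) hkey
    set B := D.filter (fun w => c0 ∈ χ {v0, w}) with hBdef
    obtain ⟨v', c', w, hwB, hv'B, hv'w, hlt, hcw⟩ := ih B hc0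
    have hBsub : ∀ x ∈ B, x ∈ A ∧ x ≠ v0 ∧ c0 ∈ χ {v0, x} := by
      intro x hx
      rw [hBdef, Finset.mem_filter] at hx
      exact ⟨Finset.mem_of_mem_erase hx.1, Finset.ne_of_mem_erase hx.1, hx.2⟩
    refine ⟨Fin.cons v0 v', Fin.cons c0 c', w, (hBsub w hwB).1, ?_, ?_, ?_, ?_⟩
    · intro i
      refine Fin.cases ?_ (fun i' => ?_) i
      · simpa using hv0
      · simpa using (hBsub _ (hv'B i')).1
    · intro i
      refine Fin.cases ?_ (fun i' => ?_) i
      · simpa using fun h => (hBsub w hwB).2.1 h.symm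
      · simpa using hv'w i'
    · intro i j
      induction i using Fin.cases with
      | zero =>
        induction j using Fin.cases with
        | zero => intro h; exact absurd h (lt_irrefl _)
        | succ j' =>
          intro _
          simp only [Fin.cons_zero, Fin.cons_succ]
          exact ⟨fun h => (hBsub _ (hv'B j')).2.1 h.symm, (hBsub _ (hv'B j')).2.2⟩
      | succ i' =>
        induction j using Fin.cases with
        | zero => intro h; simp [Fin.lt_def] at h
        | succ j' =>
          intro h
          simp only [Fin.cons_succ]
          exact hlt i' j' (by simpa [Fin.succ_lt_succ_iff] using h)
    · intro i
      refine Fin.cases ?_ (fun i' => ?_) i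
      · simpa using (hBsub w hwB).2.2
      · simpa using hcw i'

lemma mem_ramsey_set (n r s : ℕ) (hn : 3 ≤ n) (hs : 1 ≤ s) (hsr : s < r) :
    setRamsey 2 n r s ≤ gES r s ((n - 2) * r + 1) := by
  apply Nat.sInf_le
  have hr : 0 < r := by omega
  set T := (n - 2) * r + 1 with hT
  intro χ hχ
  obtain ⟨v, c, w, hwA, hvA, hvw, hlt, hcw⟩ :=
    seq_lemma hr hs χ hχ T Finset.univ (by simp)
  have hpig : (Finset.univ : Finset (Fin r)).card * (n - 2)
      < (Finset.univ : Finset (Fin T)).card := by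
    simp only [Finset.card_univ, Fintype.card_fin]
    calc r * (n - 2) = (n - 2) * r := Nat.mul_comm _ _
      _ < T := by omega
  obtain ⟨d, -, hd⟩ := Finset.exists_lt_card_fiber_of_mul_lt_card_of_maps_to
    (fun a _ => Finset.mem_univ (c a)) hpig
  obtain ⟨F', hF'sub, hF'card⟩ := Finset.exists_subset_card_eq
    (show n - 1 ≤ (Finset.univ.filter fun x => c x = d).card by omega)
  have hF'd : ∀ i ∈ F', c i = d := by
    intro i hi
    exact (Finset.mem_filter.mp (hF'sub hi)).2
  have hwim : w ∉ F'.image v := by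
    rw [Finset.mem_image]
    rintro ⟨i, -, h⟩
    exact hvw i h
  have hinj : Set.InjOn v ↑F' := by
    intro i _ j _ hij
    by_contra hne
    rcases lt_or_gt_of_ne hne with h | h
    · exact (hlt i j h).1 hij
    · exact (hlt j i h).1 hij.symm
  have himcard : (F'.image v).card = n - 1 := by
    rw [Finset.card_image_of_injOn hinj, hF'card]
  refine ⟨insert w (F'.image v), ?_, d, ?_⟩
  · rw [Finset.card_insert_of_notMem hwim, himcard]; omega
  · intro e he hcard2
    obtain ⟨a, b, hab, rfl⟩ := Finset.card_eq_two.mp hcard2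
    have ha : a ∈ insert w (F'.image v) := he (by simp)
    have hb : b ∈ insert w (F'.image v) := he (by simp)
    rw [Finset.mem_insert, Finset.mem_image] at ha hb
    rcases ha with rfl | ⟨i, hi, rfl⟩
    · rcases hb with rfl | ⟨j, hj, rfl⟩
      · exact absurd rfl hab
      · rw [Finset.pair_comm]
        rw [← hF'd j hj]
        exact hcw j
    · rcases hb with rfl | ⟨j, hj, rfl⟩
      · rw [← hF'd i hi]
        exact hcw i
      · have hij : i ≠ j := fun h => hab (h ▸ rfl)
        rcases lt_or_gt_of_ne hij with h | h
        · rw [← hF'd i hi]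
          exact (hlt i j h).2
        · rw [Finset.pair_comm, ← hF'd j hj]
          exact (hlt j i h).2

lemma gES_real_bound (r s : ℕ) (hs : 1 ≤ s) (hsr : s < r) (t : ℕ) :
    ((r : ℝ) - s) * (gES r s t) ≤ s * ((r : ℝ) / s) ^ t + r - 2 * s := by
  have hs0 : (0 : ℝ) < s := by exact_mod_cast hs
  have hrs : (s : ℝ) < r := by exact_mod_cast hsr
  have hr0 : (0 : ℝ) < r := hs0.trans hrs
  induction t with
  | zero => simp [gES]; linarith
  | succ t ih =>
    have hg1 : 1 ≤ gES r s t := gES_pos r s t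
    have hG1 : (1 : ℝ) ≤ (gES r s t : ℝ) := by exact_mod_cast hg1
    have hP1 : (1 : ℝ) ≤ ((r : ℝ) / s) ^ t :=
      one_le_pow₀ (by rw [le_div_iff₀ hs0]; linarith)
    have hcast : ((gES r s (t + 1) : ℕ) : ℝ)
        ≤ 2 + r * ((gES r s t : ℝ) - 1) / s := by
      have hgeq : gES r s (t + 1) = 1 + (r * (gES r s t - 1) + s) / s := rfl
      have h2 : (((r * (gES r s t - 1) + s) / s : ℕ) : ℝ)
          ≤ ((r * (gES r s t - 1) + s : ℕ) : ℝ) / s := Nat.cast_div_le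
      have h3 : ((r * (gES r s t - 1) + s : ℕ) : ℝ)
          = r * ((gES r s t : ℝ) - 1) + s := by
        push_cast [Nat.cast_sub hg1]; ring
      have h4 : ((r : ℝ) * ((gES r s t : ℝ) - 1) + s) / s
          = r * ((gES r s t : ℝ) - 1) / s + 1 := by field_simp
      rw [hgeq]; push_cast
      rw [h3, h4] at h2
      linarith
    have hsQ : (s : ℝ) * (r * ((gES r s t : ℝ) - 1) / s)
        = r * ((gES r s t : ℝ) - 1) := by field_simp
    have ihr := mul_le_mul_of_nonneg_left ih hr0.le
    have hkey : (s : ℝ) * (((r : ℝ) - s) * (gES r s (t + 1) : ℝ))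
        ≤ s * (r * ((r : ℝ) / s) ^ t + r - 2 * s) := by
      calc (s : ℝ) * (((r : ℝ) - s) * (gES r s (t + 1) : ℝ))
          ≤ s * (((r : ℝ) - s) * (2 + r * ((gES r s t : ℝ) - 1) / s)) := by
            apply mul_le_mul_of_nonneg_left _ hs0.le
            exact mul_le_mul_of_nonneg_left hcast (by linarith)
        _ = 2 * (s * ((r : ℝ) - s))
            + ((r : ℝ) - s) * (s * (r * ((gES r s t : ℝ) - 1) / s)) := by ring
        _ = 2 * (s * ((r : ℝ) - s))
            + ((r : ℝ) - s) * (r * ((gES r s t : ℝ) - 1)) := by rw [hsQ]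
        _ ≤ s * (r * ((r : ℝ) / s) ^ t + r - 2 * s) := by nlinarith [ihr]
    have hfin := le_of_mul_le_mul_left hkey hs0
    have hpow : (s : ℝ) * ((r : ℝ) / s) ^ (t + 1) = r * ((r : ℝ) / s) ^ t := by
      rw [pow_succ]; field_simp
    rw [hpow]
    linarith


/-- The Erdős–Szekeres-type upper bound (3). -/
theorem set_ramsey_erdos_szekeres (n r s : ℕ) (hn : 3 ≤ n) (hs : 1 ≤ s) (hsr : s < r) :
    (setRamsey 2 n r s : ℝ) ≤
      ((r : ℝ) / ((r : ℝ) - s)) * ((r : ℝ) / s) ^ ((n - 2) * r + 1) := by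
  have hs0 : (0 : ℝ) < s := by exact_mod_cast hs
  have hrs : (s : ℝ) < r := by exact_mod_cast hsr
  have hr0 : (0 : ℝ) < r := hs0.trans hrs
  have hd0 : (0 : ℝ) < (r : ℝ) - s := by linarith
  set T := (n - 2) * r + 1 with hT
  have h1 : (setRamsey 2 n r s : ℝ) ≤ (gES r s T : ℝ) :=
    Nat.cast_le.mpr (mem_ramsey_set n r s hn hs hsr)
  have h2 := gES_real_bound r s hs hsr T
  have hP1 : (1 : ℝ) ≤ ((r : ℝ) / s) ^ T :=
    one_le_pow₀ (by rw [le_div_iff₀ hs0]; linarith)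
  have h3 : ((r : ℝ) - s) * (gES r s T : ℝ) ≤ r * ((r : ℝ) / s) ^ T := by
    nlinarith [mul_nonneg hd0.le (sub_nonneg.mpr hP1)]
  rw [div_mul_eq_mul_div, le_div_iff₀ hd0]
  nlinarith [mul_le_mul_of_nonneg_left h1 hd0.le]
end

section
/- For all integers n ≥ 3 and a > b ≥ 1 with b ≥ a/2 and n! ≥ a, R(n;a,b) ≥ 2^{n(a-b)/(3b)}. -/
open Finset

private lemma listSumCount {α : Type*} {a : ℕ} (l : List (α × Fin a)) :
    ∑ c : Fin a, (l.filter fun p => p.2 = c).length = l.length := by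
  induction l with
  | nil => simp
  | cons p l ih =>
    have h : ∀ c : Fin a, ((p :: l).filter fun q => q.2 = c).length
        = (if p.2 = c then 1 else 0) + (l.filter fun q => q.2 = c).length := by
      intro c
      rw [List.filter_cons]
      split <;> simp_all [Nat.add_comm]
    simp only [h]
    rw [Finset.sum_add_distrib, ih, Finset.sum_ite_eq]
    simp [Nat.add_comm]

private lemma exists_chain {N a : ℕ} (ha : 2 ≤ a) (f : Fin N → Fin N → Fin a) :
    ∀ (m : ℕ) (V : Finset (Fin N)), a ^ m ≤ V.card →
    ∃ l : List (Fin N × Fin a), l.length = m ∧ (∀ p ∈ l, p.1 ∈ V) ∧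
      l.Pairwise (fun p q => p.1 ≠ q.1 ∧ f p.1 q.1 = p.2) := by
  intro m
  induction m with
  | zero => intro V _; exact ⟨[], rfl, by simp, List.Pairwise.nil⟩
  | succ m ih =>
    intro V hV
    have hA1 : 1 ≤ a ^ m := Nat.one_le_pow _ _ (by omega)
    have hpos : 0 < V.card := lt_of_lt_of_le (pow_pos (by omega) _) hV
    obtain ⟨v, hv⟩ := Finset.card_pos.mp hpos
    have hmaps : ∀ w ∈ V.erase v, (fun w => f v w) w ∈ (univ : Finset (Fin a)) :=
      fun _ _ => mem_univ _
    have hlt : (univ : Finset (Fin a)).card * (a ^ m - 1) < (V.erase v).card := by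
      rw [card_univ, Fintype.card_fin, Finset.card_erase_of_mem hv]
      have h2 : a * (a ^ m - 1) + a = a * a ^ m := by
        have h5 : a * (a ^ m - 1 + 1) = a * a ^ m := by rw [Nat.sub_add_cancel hA1]
        rw [← h5]; ring
      have h3 : a ^ (m + 1) = a * a ^ m := by ring
      omega
    obtain ⟨c, -, hc⟩ :=
      Finset.exists_lt_card_fiber_of_mul_lt_card_of_maps_to hmaps hlt
    obtain ⟨l, hlen, hmem, hpair⟩ := ih ((V.erase v).filter fun w => f v w = c) (by omega)
    refine ⟨(v, c) :: l, by simp [hlen], ?_, ?_⟩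
    · intro p hp
      rcases List.mem_cons.mp hp with h | h
      · rw [h]; exact hv
      · exact Finset.mem_of_mem_erase (Finset.mem_filter.mp (hmem p h)).1
    · rw [List.pairwise_cons]
      refine ⟨fun q hq => ?_, hpair⟩
      have hqW := Finset.mem_filter.mp (hmem q hq)
      exact ⟨(Finset.mem_erase.mp hqW.1).1.symm, hqW.2⟩

private lemma ramsey_mem (N n a b : ℕ) (hb : 1 ≤ b) (hba : b < a) (hn : 1 ≤ n)
    (hNeq : a ^ (a * (n - 1) + 1) = N)
    (χ : Finset (Fin N) → Finset (Fin a))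
    (hχ : IsSetColoring N 2 a b χ) :
    HasMonoClique N 2 n a χ := by
  classical
  have ha : 2 ≤ a := by omega
  have hf0 : (0 : ℕ) < a := by omega
  set f : Fin N → Fin N → Fin a := fun u v =>
    if h : (χ {u, v}).Nonempty then (χ {u, v}).min' h else ⟨0, hf0⟩ with hfdef
  have hfmem : ∀ u v : Fin N, u ≠ v → f u v ∈ χ {u, v} := by
    intro u v huv
    have hcard : ({u, v} : Finset (Fin N)).card = 2 := card_pair huv
    have hne : (χ {u, v}).Nonempty := by
      rw [← Finset.card_pos, hχ _ hcard]; omega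
    simp only [hfdef, dif_pos hne]
    exact Finset.min'_mem _ _
  obtain ⟨l, hlen, -, hpair⟩ := exists_chain ha f (a * (n - 1) + 1) univ
      (by rw [card_univ, Fintype.card_fin]; exact hNeq.le)
  have hcol : ∃ c : Fin a, n ≤ (l.filter fun p => p.2 = c).length := by
    by_contra hcon
    push_neg at hcon
    have hsum := listSumCount l
    have hle : ∑ c : Fin a, (l.filter fun p => p.2 = c).length
        ≤ ∑ _c : Fin a, (n - 1) :=
      Finset.sum_le_sum fun c _ => by have := hcon c; omega
    rw [hsum, hlen] at hle
    rw [Finset.sum_const, card_univ, Fintype.card_fin, smul_eq_mul] at hle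
    omega
  obtain ⟨c, hc⟩ := hcol
  set l2 := (l.filter fun p => p.2 = c).take n with hl2
  have hsub : l2.Sublist l := (List.take_sublist _ _).trans List.filter_sublist
  have hlen2 : l2.length = n := by
    rw [hl2, List.length_take]; exact Nat.min_eq_left hc
  have hpair2 := hpair.sublist hsub
  have hsnd : ∀ p ∈ l2, p.2 = c := by
    intro p hp
    have h2 := List.mem_filter.mp ((List.take_sublist _ _).subset hp)
    simpa using h2.2
  have hpairv : (l2.map Prod.fst).Pairwise fun u v => u ≠ v ∧ c ∈ χ {u, v} := by
    rw [List.pairwise_map]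
    have h' := List.Pairwise.and_mem.mp hpair2
    refine h'.imp ?_
    rintro p q ⟨hp, hq, hne, hfc⟩
    refine ⟨hne, ?_⟩
    have hm := hfmem p.1 q.1 hne
    rw [hfc, hsnd p hp] at hm
    exact hm
  have hnd : (l2.map Prod.fst).Nodup := hpairv.imp fun h => h.1
  refine ⟨(l2.map Prod.fst).toFinset, ?_, c, ?_⟩
  · rw [List.toFinset_card_of_nodup hnd, List.length_map, hlen2]
  · intro e he hcard
    obtain ⟨u, v, huv, rfl⟩ := Finset.card_eq_two.mp hcard
    have hu : u ∈ l2.map Prod.fst := List.mem_toFinset.mp (he (by simp))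
    have hv : v ∈ l2.map Prod.fst := List.mem_toFinset.mp (he (by simp))
    have hsym : Std.Symm fun u v : Fin N => c ∈ χ {u, v} := by
      constructor; intro x y h; rwa [Finset.pair_comm]
    exact ((hpairv.imp fun h => h.2).forall) hu hv huv

private lemma card_filter_mem (a b : ℕ) (hb : 1 ≤ b) (hba : b ≤ a) (c : Fin a) :
    (((univ : Finset (Fin a)).powersetCard b).filter fun t => c ∈ t).card
      = (a - 1).choose (b - 1) := by
  have htar : (((univ : Finset (Fin a)).erase c).powersetCard (b - 1)).card
      = (a - 1).choose (b - 1) := by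
    rw [Finset.card_powersetCard, Finset.card_erase_of_mem (mem_univ c), card_univ,
      Fintype.card_fin]
  rw [← htar]
  apply Finset.card_nbij' (fun t => t.erase c) (fun s => insert c s)
  · intro t ht
    simp only [Finset.mem_coe, Finset.mem_filter, Finset.mem_powersetCard] at ht
    obtain ⟨⟨-, hcard⟩, hc⟩ := ht
    rw [Finset.mem_coe, Finset.mem_powersetCard]
    refine ⟨?_, ?_⟩
    · intro x hx
      rw [Finset.mem_erase] at hx ⊢
      exact ⟨hx.1, mem_univ x⟩
    · rw [Finset.card_erase_of_mem hc, hcard]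
  · intro s hs
    rw [Finset.mem_coe, Finset.mem_powersetCard] at hs
    have hcs : c ∉ s := fun hcs => (Finset.mem_erase.mp (hs.1 hcs)).1 rfl
    simp only [Finset.mem_coe, Finset.mem_filter, Finset.mem_powersetCard]
    exact ⟨⟨Finset.subset_univ _, by rw [Finset.card_insert_of_notMem hcs, hs.2]; omega⟩,
      Finset.mem_insert_self _ _⟩
  · intro t ht
    simp only [Finset.mem_coe, Finset.mem_filter] at ht
    exact Finset.insert_erase ht.2
  · intro s hs
    rw [Finset.mem_coe, Finset.mem_powersetCard] at hs
    exact Finset.erase_insert fun hcs => (Finset.mem_erase.mp (hs.1 hcs)).1 rfl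

private lemma counting (N n a b : ℕ) (hb : 1 ≤ b) (hba : b < a) (hn3 : 3 ≤ n)
    (hfac : a ≤ n.factorial)
    (hlt : (N : ℝ) ^ n * ((b : ℝ) / a) ^ n.choose 2 < 1) :
    ∃ χ : Finset (Fin N) → Finset (Fin a), IsSetColoring N 2 a b χ ∧
      ¬HasMonoClique N 2 n a χ := by
  classical
  obtain ⟨t0, -, ht0⟩ := Finset.exists_subset_card_eq (show b ≤ (univ : Finset (Fin a)).card by
    rw [card_univ, Fintype.card_fin]; omega)
  by_cases hNn : N < n
  · refine ⟨fun _ => t0, fun e _ => ht0, ?_⟩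
    rintro ⟨S, hS, -⟩
    have hle := Finset.card_le_univ S
    rw [hS, Fintype.card_fin] at hle
    omega
  push_neg at hNn
  by_contra hcon
  push_neg at hcon
  have hall : ∀ χ : Finset (Fin N) → Finset (Fin a),
      IsSetColoring N 2 a b χ → HasMonoClique N 2 n a χ := hcon
  set Tb : Finset (Finset (Fin a)) := (univ : Finset (Fin a)).powersetCard b with hTb
  set K : ℕ := a.choose b with hK
  set K1 : ℕ := (a - 1).choose (b - 1) with hK1
  have hTbcard : Tb.card = K := by
    rw [hTb, card_powersetCard, card_univ, Fintype.card_fin]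
  set M : ℕ := Fintype.card (Finset (Fin N)) with hM
  set E : ℕ := n.choose 2 with hE
  set Ω : Finset (Finset (Fin N) → Finset (Fin a)) :=
    Fintype.piFinset (fun _ => Tb) with hΩ
  have hΩcard : Ω.card = K ^ M := by
    rw [hΩ, Fintype.card_piFinset]
    simp [hTbcard, hM, Finset.prod_const]
  set Bad : Finset (Fin N) → Fin a → Finset (Finset (Fin N) → Finset (Fin a)) :=
    fun S c => Fintype.piFinset (fun e =>
      if e ∈ S.powersetCard 2 then Tb.filter (fun t => c ∈ t) else Tb) with hBad
  have hcover : Ω ⊆ (((univ : Finset (Fin N)).powersetCard n) ×ˢ (univ : Finset (Fin a))).biUnion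
      (fun Sc => Bad Sc.1 Sc.2) := by
    intro ω hω
    have hωTb : ∀ e, ω e ∈ Tb := fun e => Fintype.mem_piFinset.mp hω e
    have hcol : IsSetColoring N 2 a b ω := by
      intro e he
      have := hωTb e
      rw [hTb, Finset.mem_powersetCard] at this
      exact this.2
    obtain ⟨S, hS, c, hmono⟩ := hall ω hcol
    rw [Finset.mem_biUnion]
    refine ⟨(S, c), ?_, ?_⟩
    · rw [Finset.mem_product]
      exact ⟨Finset.mem_powersetCard.mpr ⟨Finset.subset_univ _, hS⟩, mem_univ _⟩
    · rw [hBad, Fintype.mem_piFinset]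
      intro e
      split_ifs with he
      · rw [Finset.mem_powersetCard] at he
        exact Finset.mem_filter.mpr ⟨hωTb e, hmono e he.1 he.2⟩
      · exact hωTb e
  have hbadcard : ∀ S ∈ (univ : Finset (Fin N)).powersetCard n, ∀ c : Fin a,
      (Bad S c).card = K1 ^ E * K ^ (M - E) := by
    intro S hS c
    have hScard : S.card = n := (Finset.mem_powersetCard.mp hS).2
    rw [hBad, Fintype.card_piFinset]
    simp only [apply_ite Finset.card]
    rw [Finset.prod_ite, Finset.prod_const, Finset.prod_const]
    have h1 : (univ.filter fun e : Finset (Fin N) => e ∈ S.powersetCard 2)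
        = S.powersetCard 2 := Finset.filter_univ_mem _
    have h2 : (univ.filter fun e : Finset (Fin N) => ¬ e ∈ S.powersetCard 2)
        = univ \ S.powersetCard 2 := by
      rw [Finset.filter_not, h1]
    have hc1 : (Tb.filter fun t => c ∈ t).card = K1 := by
      rw [hK1, hTb]; exact card_filter_mem a b hb (le_of_lt hba) c
    have hc2 : (S.powersetCard 2).card = E := by
      rw [Finset.card_powersetCard, hScard, hE]
    have hc3 : ((univ : Finset (Finset (Fin N))) \ S.powersetCard 2).card = M - E := by
      rw [Finset.card_sdiff_of_subset (Finset.subset_univ _), Finset.card_univ, hc2, hM]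
    rw [h1, h2, hc1, hc2, hc3, hTbcard]
  -- sum bound
  have hEM : E ≤ M := by
    obtain ⟨S0, -, hS0⟩ := Finset.exists_subset_card_eq
      (show n ≤ (univ : Finset (Fin N)).card by rw [card_univ, Fintype.card_fin]; omega)
    calc E = (S0.powersetCard 2).card := by rw [Finset.card_powersetCard, hS0]
    _ ≤ Fintype.card (Finset (Fin N)) := Finset.card_le_univ _
  have hsum : K ^ M ≤ (N.choose n * a) * (K1 ^ E * K ^ (M - E)) := by
    rw [← hΩcard]
    calc Ω.card ≤ ((((univ : Finset (Fin N)).powersetCard n) ×ˢ (univ : Finset (Fin a))).biUnion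
        (fun Sc => Bad Sc.1 Sc.2)).card := Finset.card_le_card hcover
    _ ≤ ∑ Sc ∈ (((univ : Finset (Fin N)).powersetCard n) ×ˢ (univ : Finset (Fin a))),
        (Bad Sc.1 Sc.2).card := Finset.card_biUnion_le
    _ = ∑ Sc ∈ (((univ : Finset (Fin N)).powersetCard n) ×ˢ (univ : Finset (Fin a))),
        (K1 ^ E * K ^ (M - E)) := by
        refine Finset.sum_congr rfl fun Sc hSc => ?_
        rw [Finset.mem_product] at hSc
        exact hbadcard Sc.1 hSc.1 Sc.2
    _ = (N.choose n * a) * (K1 ^ E * K ^ (M - E)) := by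
        rw [Finset.sum_const, smul_eq_mul, Finset.card_product, Finset.card_powersetCard,
          Finset.card_univ, Finset.card_univ, Fintype.card_fin, Fintype.card_fin]
  have hKpos : 0 < K := Nat.choose_pos (le_of_lt hba)
  have hmain : K ^ E ≤ N.choose n * a * K1 ^ E := by
    have h1 : K ^ E * K ^ (M - E) ≤ (N.choose n * a * K1 ^ E) * K ^ (M - E) := by
      rw [← pow_add, Nat.add_sub_cancel' hEM, mul_assoc]
      exact hsum
    exact Nat.le_of_mul_le_mul_right h1 (pow_pos hKpos _)
  -- move to ℝ
  have hCa : N.choose n * a ≤ N ^ n := by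
    calc N.choose n * a ≤ N.choose n * n.factorial := Nat.mul_le_mul_left _ hfac
    _ = n.factorial * N.choose n := mul_comm _ _
    _ = N.descFactorial n := (Nat.descFactorial_eq_factorial_mul_choose N n).symm
    _ ≤ N ^ n := Nat.descFactorial_le_pow N n
  have hrel : (a : ℝ) * K1 = K * b := by
    have h0 := Nat.add_one_mul_choose_eq (a - 1) (b - 1)
    have h1 : a - 1 + 1 = a := by omega
    have h2 : b - 1 + 1 = b := by omega
    simp only [Nat.succ_eq_add_one, h1, h2] at h0
    rw [hK, hK1]
    exact_mod_cast h0
  have ha0 : (0 : ℝ) < a := by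
    have : 0 < a := by omega
    exact_mod_cast this
  have hK1r : (K1 : ℝ) = K * ((b : ℝ) / a) := by
    field_simp
    linarith [hrel]
  have hreal : ((K : ℝ)) ^ E ≤ (N : ℝ) ^ n * ((K : ℝ) * ((b : ℝ) / a)) ^ E := by
    rw [← hK1r]
    calc ((K : ℝ)) ^ E ≤ ((N.choose n * a * K1 ^ E : ℕ) : ℝ) := by exact_mod_cast hmain
    _ ≤ (N : ℝ) ^ n * (K1 : ℝ) ^ E := by
        push_cast
        have : ((N.choose n : ℝ) * a) ≤ (N : ℝ) ^ n := by exact_mod_cast hCa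
        have hK1nn : (0:ℝ) ≤ (K1 : ℝ) ^ E := by positivity
        nlinarith
  have hKE : (0 : ℝ) < (K : ℝ) ^ E := by positivity
  rw [mul_pow] at hreal
  have hfin : (1 : ℝ) ≤ (N : ℝ) ^ n * ((b : ℝ) / a) ^ E := by
    have h2 : (K : ℝ) ^ E ≤ ((N : ℝ) ^ n * ((b : ℝ) / a) ^ E) * (K : ℝ) ^ E := by
      rw [mul_comm ((K:ℝ)^E)] at hreal
      linarith [hreal]
    exact (le_mul_iff_one_le_left hKE).mp h2
  linarith

private lemma log_chord {x : ℝ} (h1 : 1 ≤ x) (h2 : x ≤ 2) :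
    (x - 1) * Real.log 2 ≤ Real.log x := by
  have hc := strictConcaveOn_log_Ioi.concaveOn
  have hkey := hc.2 (Set.mem_Ioi.mpr one_pos) (Set.mem_Ioi.mpr two_pos)
    (by linarith : (0:ℝ) ≤ 2 - x) (by linarith : (0:ℝ) ≤ x - 1) (by ring)
  simp only [smul_eq_mul, Real.log_one, mul_one, mul_zero] at hkey
  have hx : (2:ℝ) - x + (x - 1) * 2 = x := by ring
  rw [hx] at hkey
  linarith

/-- The first-moment lower bound (4). -/
theorem set_ramsey_first_moment (n a b : ℕ) (hn : 3 ≤ n) (hb : 1 ≤ b) (hba : b < a)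
    (h2b : a ≤ 2 * b) (hfac : a ≤ Nat.factorial n) :
    (2 : ℝ) ^ (((n : ℝ) * ((a : ℝ) - b)) / (3 * b)) ≤ (setRamsey 2 n a b : ℝ) := by
  have hne : {N | ∀ χ : Finset (Fin N) → Finset (Fin a),
      IsSetColoring N 2 a b χ → HasMonoClique N 2 n a χ}.Nonempty :=
    ⟨a ^ (a * (n - 1) + 1), fun χ hχ =>
      ramsey_mem _ n a b hb hba (by omega) rfl χ hχ⟩
  have hmem : setRamsey 2 n a b ∈ {N | ∀ χ : Finset (Fin N) → Finset (Fin a),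
      IsSetColoring N 2 a b χ → HasMonoClique N 2 n a χ} := by
    unfold setRamsey
    exact Nat.sInf_mem hne
  by_contra hcon
  push_neg at hcon
  set R := setRamsey 2 n a b with hR
  set X : ℝ := (2 : ℝ) ^ (((n : ℝ) * ((a : ℝ) - b)) / (3 * b)) with hX
  -- basic positivity
  have hb0 : (0:ℝ) < b := by exact_mod_cast hb
  have ha0 : (0:ℝ) < a := by exact_mod_cast Nat.pos_of_ne_zero (by omega)
  have hx1 : 1 ≤ (a:ℝ)/b := by
    rw [le_div_iff₀ hb0, one_mul]; exact_mod_cast hba.le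
  have hx2 : (a:ℝ)/b ≤ 2 := by
    rw [div_le_iff₀ hb0]; exact_mod_cast h2b
  have hab1 : (0:ℝ) < (a:ℝ)/b := by positivity
  have hlog2 : 0 < Real.log 2 := Real.log_pos (by norm_num)
  have hL : ((a:ℝ)/b - 1) ≤ Real.logb 2 ((a:ℝ)/b) := by
    rw [Real.logb, le_div_iff₀ hlog2]
    exact log_chord hx1 hx2
  have hn3 : (3:ℝ) ≤ (n:ℝ) := by exact_mod_cast hn
  have hEcast : ((n.choose 2 : ℕ) : ℝ) = (n:ℝ) * ((n:ℝ) - 1) / 2 := Nat.cast_choose_two (K := ℝ) n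
  -- exponent inequality
  have hexp : (n : ℝ) * ((a : ℝ) - b) / (3 * b) * n
      ≤ Real.logb 2 ((a:ℝ)/b) * (n.choose 2 : ℕ) := by
    have h1 : (n:ℝ) * ((a:ℝ)-b) / (3*b) * n = (n:ℝ)*n/3 * ((a:ℝ)/b - 1) := by
      field_simp
    rw [h1, hEcast]
    have h3 : 0 ≤ (a:ℝ)/b - 1 := by linarith
    have h2 : (n:ℝ)*n/3 ≤ (n:ℝ)*((n:ℝ)-1)/2 := by nlinarith
    calc (n:ℝ)*n/3 * ((a:ℝ)/b - 1) ≤ (n:ℝ)*((n:ℝ)-1)/2 * ((a:ℝ)/b - 1) :=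
          mul_le_mul_of_nonneg_right h2 h3
    _ ≤ (n:ℝ)*((n:ℝ)-1)/2 * Real.logb 2 ((a:ℝ)/b) :=
          mul_le_mul_of_nonneg_left hL (by nlinarith)
    _ = Real.logb 2 ((a:ℝ)/b) * ((n:ℝ)*((n:ℝ)-1)/2) := mul_comm _ _
  -- X^n ≤ (a/b)^(n.choose 2)
  have hXpow : X ^ n ≤ ((a:ℝ)/b) ^ (n.choose 2) := by
    rw [hX, ← Real.rpow_natCast ((2:ℝ) ^ (((n : ℝ) * ((a : ℝ) - b)) / (3 * b))) n,
      ← Real.rpow_mul (by norm_num : (0:ℝ) ≤ 2)]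
    rw [← Real.rpow_natCast ((a:ℝ)/b) (n.choose 2),
      ← Real.rpow_logb (b := 2) (by norm_num) (by norm_num) hab1,
      ← Real.rpow_mul (by norm_num : (0:ℝ) ≤ 2)]
    exact Real.rpow_le_rpow_of_exponent_le one_le_two hexp
  have hXpos : 0 < X := by rw [hX]; positivity
  have hRpow : (R:ℝ)^n < X^n := by
    apply pow_lt_pow_left₀ hcon (Nat.cast_nonneg R) (by omega)
  have hbapos : (0:ℝ) < ((b:ℝ)/a) ^ n.choose 2 := by positivity
  have hfin : (R:ℝ)^n * ((b:ℝ)/a)^(n.choose 2) < 1 := by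
    have hone : ((a:ℝ)/b) * ((b:ℝ)/a) = 1 := by field_simp
    calc (R:ℝ)^n * ((b:ℝ)/a)^(n.choose 2) < X^n * ((b:ℝ)/a)^(n.choose 2) :=
          mul_lt_mul_of_pos_right hRpow hbapos
    _ ≤ ((a:ℝ)/b)^(n.choose 2) * ((b:ℝ)/a)^(n.choose 2) :=
          mul_le_mul_of_nonneg_right hXpow (le_of_lt hbapos)
    _ = 1 := by rw [← mul_pow, hone, one_pow]
  obtain ⟨χ, hχ, hnm⟩ := counting R n a b hb hba hn hfac hfin
  exact hnm (hmem χ hχ)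
end

section
/- For all integers n ≥ 2 and r > s ≥ 1, if (r-s)·C(n,2) < r (where C(n,2) = n(n-1)/2), then R(n;r,s) = n. -/
/-- If `(r-s) * C(n,2) < r` then `R(n;r,s) = n`. -/
theorem set_ramsey_eq_n (n r s : ℕ) (hn : 2 ≤ n) (hs : 1 ≤ s) (hsr : s < r)
    (h : (r - s) * n.choose 2 < r) :
    setRamsey 2 n r s = n := by
  have hmem : n ∈ {N | ∀ χ : Finset (Fin N) → Finset (Fin r),
      IsSetColoring N 2 r s χ → HasMonoClique N 2 n r χ} := by
    intro χ hχ
    refine ⟨Finset.univ, by simp, ?_⟩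
    set F := (Finset.univ : Finset (Fin n)).powersetCard 2 with hF
    set U := F.biUnion (fun e => (χ e)ᶜ) with hU
    have hcardF : F.card = n.choose 2 := by simp [hF]
    have hUcard : U.card ≤ n.choose 2 * (r - s) := by
      calc U.card ≤ ∑ e ∈ F, ((χ e)ᶜ).card := Finset.card_biUnion_le
        _ ≤ ∑ _e ∈ F, (r - s) := Finset.sum_le_sum (fun e he => by
            rw [Finset.card_compl, hχ e (Finset.mem_powersetCard.mp he).2]
            simp)
        _ = n.choose 2 * (r - s) := by rw [Finset.sum_const, hcardF, smul_eq_mul]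
    have hUlt : U.card < r := lt_of_le_of_lt hUcard (by rwa [mul_comm] at h)
    have hne : Uᶜ.Nonempty := by
      rw [← Finset.card_pos, Finset.card_compl, Fintype.card_fin]
      omega
    obtain ⟨c, hc⟩ := hne
    refine ⟨c, fun e he hcard => ?_⟩
    have heF : e ∈ F := Finset.mem_powersetCard.mpr ⟨he, hcard⟩
    by_contra hcn
    exact (Finset.mem_compl.mp hc)
      (Finset.mem_biUnion.mpr ⟨e, heF, Finset.mem_compl.mpr hcn⟩)
  refine le_antisymm (Nat.sInf_le hmem) (le_csInf ⟨n, hmem⟩ ?_)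
  intro N hN
  by_contra hlt
  push_neg at hlt
  have hχ : IsSetColoring N 2 r s
      (fun _ => (Finset.range s).attachFin
        (fun m hm => lt_trans (Finset.mem_range.mp hm) hsr)) := by
    intro e _
    simp [Finset.card_attachFin]
  obtain ⟨S, hS, -⟩ := hN _ hχ
  have := Finset.card_le_univ S
  simp [hS] at this
  omega
end

section
/- For every integer n ≥ 3 and every real ε > 0 there exists a constant C (depending only on n and ε) such that for all integers r > s ≥ 1 with s ≥ (1 - 1/(n-1) + ε)·r, R(n;r,s) ≤ C. -/
open Finset SimpleGraph

instance colorGraph.decAdj (N r : ℕ) (χ : Finset (Fin N) → Finset (Fin r)) (i : Fin r) :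
    DecidableRel (colorGraph N r χ i).Adj := fun u v =>
  inferInstanceAs (Decidable (u ≠ v ∧ i ∈ χ {u, v}))

lemma card_pairs_eq_sum_degrees {N r : ℕ} (χ : Finset (Fin N) → Finset (Fin r)) (i : Fin r) :
    ((Finset.univ : Finset (Fin N)).offDiag.filter (fun p => i ∈ χ {p.1, p.2})).card
      = ∑ v, (colorGraph N r χ i).degree v := by
  have h : (Finset.univ : Finset (Fin N)).offDiag.filter (fun p => i ∈ χ {p.1, p.2})
      = Finset.univ.biUnion
        (fun v => {v} ×ˢ (colorGraph N r χ i).neighborFinset v) := by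
    ext p
    simp only [mem_filter, mem_offDiag, mem_univ, true_and, mem_biUnion, mem_product,
      mem_singleton, mem_neighborFinset]
    constructor
    · rintro ⟨hne, hmem⟩
      exact ⟨p.1, ⟨rfl, hne, hmem⟩⟩
    · rintro ⟨v, rfl, hadj⟩
      exact ⟨hadj.1, hadj.2⟩
  rw [h, Finset.card_biUnion]
  · refine Finset.sum_congr rfl fun v _ => ?_
    rw [Finset.card_product, Finset.card_singleton, one_mul, SimpleGraph.degree]
  · intro a _ b _ hab
    simp only [Finset.disjoint_left, mem_product, mem_singleton]
    rintro p ⟨rfl, -⟩ ⟨h2, -⟩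
    exact hab h2

lemma turan_degree_le {N m : ℕ} (v : Fin N) :
    (turanGraph N m).degree v ≤ N - N / m := by
  classical
  set cls : Finset (Fin N) := Finset.univ.filter (fun w : Fin N => (w : ℕ) % m = (v : ℕ) % m)
  have hdeg : (turanGraph N m).degree v + cls.card = N := by
    rw [SimpleGraph.degree, neighborFinset_eq_filter]
    have : (Finset.univ.filter (fun w : Fin N => (turanGraph N m).Adj v w))
        = Finset.univ.filter (fun w : Fin N => ¬ ((w : ℕ) % m = (v : ℕ) % m)) := by
      apply Finset.filter_congr
      intro w _
      simp only [turanGraph]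
      exact ⟨fun h h2 => h h2.symm, fun h h2 => h h2.symm⟩
    rw [this]
    rw [add_comm]
    simpa using Finset.card_filter_add_card_filter_not
      (s := (Finset.univ : Finset (Fin N))) (p := fun w : Fin N => (w : ℕ) % m = (v : ℕ) % m)
  have hcls : N / m ≤ cls.card := by
    rcases Nat.eq_zero_or_pos m with rfl | hm
    · simp
    have hlt : ∀ k : ℕ, k < N / m → (v : ℕ) % m + k * m < N := by
      intro k hk
      have h1 : (k + 1) * m ≤ (N / m) * m := Nat.mul_le_mul_right m hk
      have h2 : (N / m) * m ≤ N := Nat.div_mul_le_self N m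
      have h3 : (v : ℕ) % m < m := Nat.mod_lt _ hm
      nlinarith
    have : ∀ k : Fin (N / m), (⟨(v : ℕ) % m + (k : ℕ) * m, hlt k k.2⟩ : Fin N) ∈ cls := by
      intro k
      simp only [cls, mem_filter, mem_univ, true_and]
      simp [Nat.add_mul_mod_self_right, Nat.mod_mod_of_dvd]
    calc N / m = (Finset.univ : Finset (Fin (N / m))).card := by simp
      _ ≤ cls.card := by
          apply Finset.card_le_card_of_injOn
            (fun k : Fin (N / m) => (⟨(v : ℕ) % m + (k : ℕ) * m, hlt k k.2⟩ : Fin N))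
            (fun k _ => this k)
          intro a _ b _ hab
          have := congrArg (fun x : Fin N => (x : ℕ)) hab
          simp only at this
          have hm' := hm
          have : (a : ℕ) = (b : ℕ) := by
            have := Nat.add_left_cancel this
            exact Nat.eq_of_mul_eq_mul_right hm' this
          exact Fin.ext this
  omega

lemma key_count {N n r s : ℕ} (hn : 3 ≤ n) (hr : 0 < r)
    (χ : Finset (Fin N) → Finset (Fin r)) (hχ : IsSetColoring N 2 r s χ)
    (hno : ¬ HasMonoClique N 2 n r χ) :
    s * (N * N - N) ≤ r * (N * (N - N / (n - 1))) := by
  classical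
  set Q := (Finset.univ : Finset (Fin N)).offDiag with hQ
  -- total color count
  have htotal : ∑ p ∈ Q, (χ {p.1, p.2}).card = s * (N * N - N) := by
    have : ∀ p ∈ Q, (χ {p.1, p.2}).card = s := by
      intro p hp
      have hne : p.1 ≠ p.2 := (Finset.mem_offDiag.1 hp).2.2
      exact hχ _ (Finset.card_pair hne)
    rw [Finset.sum_congr rfl this, Finset.sum_const, smul_eq_mul, hQ, Finset.offDiag_card,
      Finset.card_univ, Fintype.card_fin, mul_comm]
  -- swap sums
  have hswap : ∑ p ∈ Q, (χ {p.1, p.2}).card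
      = ∑ i : Fin r, (Q.filter (fun p => i ∈ χ {p.1, p.2})).card := by
    have h1 : ∀ p ∈ Q, (χ {p.1, p.2}).card
        = ∑ i : Fin r, (if i ∈ χ {p.1, p.2} then 1 else 0) := by
      intro p _
      rw [← Finset.card_filter, Finset.filter_univ_mem]
    rw [Finset.sum_congr rfl h1, Finset.sum_comm]
    exact Finset.sum_congr rfl fun i _ => (Finset.card_filter _ _).symm
  -- pigeonhole
  obtain ⟨i, -, hi⟩ : ∃ i ∈ (Finset.univ : Finset (Fin r)),
      s * (N * N - N) ≤ r * (Q.filter (fun p => i ∈ χ {p.1, p.2})).card := by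
    apply Finset.exists_le_of_sum_le ⟨⟨0, hr⟩, Finset.mem_univ _⟩
    rw [Finset.sum_const, ← Finset.mul_sum, Finset.card_univ, Fintype.card_fin, smul_eq_mul,
      ← hswap, htotal]
  -- the color graph
  set G := colorGraph N r χ i with hG
  have hPG : (Q.filter (fun p => i ∈ χ {p.1, p.2})).card = 2 * G.edgeFinset.card := by
    rw [hQ, card_pairs_eq_sum_degrees, SimpleGraph.sum_degrees_eq_twice_card_edges]
  -- clique-freeness
  have hcf : G.CliqueFree n := by
    intro S hS
    refine hno ⟨S, hS.2, i, ?_⟩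
    intro e he hcard
    obtain ⟨x, y, hxy, rfl⟩ := Finset.card_eq_two.1 hcard
    have hadj : G.Adj x y := hS.1 (he (by simp)) (he (by simp)) hxy
    exact hadj.2
  -- Turán bound
  have hm : 0 < n - 1 := by omega
  have hcf' : G.CliqueFree ((n - 1) + 1) := by
    have : (n - 1) + 1 = n := by omega
    rw [this]; exact hcf
  have hturan : G.edgeFinset.card ≤ (turanGraph N (n - 1)).edgeFinset.card :=
    (SimpleGraph.isTuranMaximal_turanGraph hm).2 hcf'
  have hTdeg : 2 * (turanGraph N (n - 1)).edgeFinset.card ≤ N * (N - N / (n - 1)) := by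
    rw [← SimpleGraph.sum_degrees_eq_twice_card_edges]
    calc ∑ v, (turanGraph N (n - 1)).degree v ≤ ∑ _v : Fin N, (N - N / (n - 1)) :=
          Finset.sum_le_sum fun v _ => turan_degree_le v
      _ = N * (N - N / (n - 1)) := by
          rw [Finset.sum_const, Finset.card_univ, Fintype.card_fin, smul_eq_mul]
  calc s * (N * N - N) ≤ r * (Q.filter (fun p => i ∈ χ {p.1, p.2})).card := hi
    _ = r * (2 * G.edgeFinset.card) := by rw [hPG]
    _ ≤ r * (2 * (turanGraph N (n - 1)).edgeFinset.card) := by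
        exact Nat.mul_le_mul_left r (Nat.mul_le_mul_left 2 hturan)
    _ ≤ r * (N * (N - N / (n - 1))) := Nat.mul_le_mul_left r hTdeg


lemma main_step (n : ℕ) (hn : 3 ≤ n) (ε : ℝ) (hε : 0 < ε)
    (r s : ℕ) (hrs : s < r)
    (hd : (1 - 1 / ((n : ℝ) - 1) + ε) * r ≤ (s : ℝ))
    (N : ℕ) (hN2 : 2 ≤ N) (hNε : 2 ≤ ε * ((N : ℝ) - 1)) :
    ∀ χ : Finset (Fin N) → Finset (Fin r),
      IsSetColoring N 2 r s χ → HasMonoClique N 2 n r χ := by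
  intro χ hχ
  by_contra hno
  have hr : 0 < r := by omega
  have hkey := key_count hn hr χ hχ hno
  have hm : 0 < n - 1 := by omega
  have hN1 : N ≤ N * N := Nat.le_mul_of_pos_left N (by omega)
  have hNd : N / (n - 1) ≤ N := Nat.div_le_self N (n - 1)
  have hmr : (((n - 1 : ℕ)) : ℝ) = (n : ℝ) - 1 := by
    push_cast [Nat.cast_sub (by omega : 1 ≤ n)]
    ring
  have hm2 : (2 : ℝ) ≤ (n : ℝ) - 1 := by
    rw [← hmr]
    exact_mod_cast (by omega : 2 ≤ n - 1)
  have hmpos : (0 : ℝ) < (n : ℝ) - 1 := by linarith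
  have hrpos : (0 : ℝ) < (r : ℝ) := by exact_mod_cast hr
  have hapos : (0 : ℝ) < (N : ℝ) := by
    have : (2:ℝ) ≤ (N:ℝ) := by exact_mod_cast hN2
    linarith
  have ha2 : (2 : ℝ) ≤ (N : ℝ) := by exact_mod_cast hN2
  -- cast the key inequality
  have h2 : (s : ℝ) * ((N:ℝ) * (N:ℝ) - (N:ℝ))
      ≤ (r : ℝ) * ((N:ℝ) * ((N:ℝ) - ((N / (n - 1) : ℕ) : ℝ))) := by
    have h0 := (Nat.cast_le (α := ℝ)).2 hkey
    push_cast [Nat.cast_sub hN1, Nat.cast_sub hNd] at h0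
    convert h0 using 2
  -- floor bound : N < (n-1) * (N/(n-1)) + (n-1)
  have h3 : (N : ℝ) < ((n:ℝ) - 1) * ((N / (n - 1) : ℕ) : ℝ) + ((n:ℝ) - 1) := by
    have hnat : N < (n - 1) * (N / (n - 1)) + (n - 1) := by
      have h4 := Nat.div_add_mod N (n - 1)
      have h5 := Nat.mod_lt N hm
      omega
    have h0 := (Nat.cast_lt (α := ℝ)).2 hnat
    push_cast at h0
    rw [hmr] at h0
    exact h0
  set a : ℝ := (N : ℝ)
  set b : ℝ := ((N / (n - 1) : ℕ) : ℝ)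
  set mr : ℝ := (n : ℝ) - 1
  -- density hypothesis
  have hd' : (1 - 1 / mr + ε) * r ≤ (s : ℝ) := hd
  have e1 : (1 - 1 / mr + ε) * ((r:ℝ) * (a * a - a)) ≤ (r : ℝ) * (a * (a - b)) := by
    have haa : (0:ℝ) ≤ a * a - a := by nlinarith
    calc (1 - 1 / mr + ε) * ((r:ℝ) * (a * a - a))
        = ((1 - 1 / mr + ε) * r) * (a * a - a) := by ring
      _ ≤ (s : ℝ) * (a * a - a) := mul_le_mul_of_nonneg_right hd' haa
      _ ≤ (r : ℝ) * (a * (a - b)) := h2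
  have e2 : (1 - 1 / mr + ε) * (a * a - a) ≤ a * (a - b) := by
    have h6 : (r:ℝ) * ((1 - 1 / mr + ε) * (a * a - a)) ≤ (r:ℝ) * (a * (a - b)) := by
      linarith [e1]
    exact le_of_mul_le_mul_left h6 hrpos
  have e3 : a / mr - 1 < b := by
    rw [div_sub_one (ne_of_gt hmpos), div_lt_iff₀ hmpos]
    linarith
  have e4 : a * (a - b) < a * (a - (a / mr - 1)) := by
    apply mul_lt_mul_of_pos_left _ hapos
    linarith
  have expand : a * (a - (a / mr - 1)) = a * a - (1/mr) * (a * a) + a := by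
    field_simp
    ring
  have hminv : (0:ℝ) < 1 / mr := by positivity
  have hminv2 : 1 / mr ≤ 1/2 := by
    rw [div_le_div_iff₀ hmpos (by norm_num)]
    linarith
  have final : (1 - 1 / mr + ε) * (a * a - a) < a * a - (1/mr) * (a * a) + a :=
    lt_of_le_of_lt e2 (expand ▸ e4)
  nlinarith [final, hNε, ha2, hminv, hminv2]


/-- For `s/r ≥ 1 - 1/(n-1) + ε`, the set-coloring Ramsey number is bounded. -/
theorem set_ramsey_bounded (n : ℕ) (hn : 3 ≤ n) (ε : ℝ) (hε : 0 < ε) :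
    ∃ C : ℕ, ∀ r s : ℕ, 1 ≤ s → s < r →
      (1 - 1 / ((n : ℝ) - 1) + ε) * r ≤ (s : ℝ) → setRamsey 2 n r s ≤ C := by
  refine ⟨⌈(2:ℝ)/ε⌉₊ + 2, fun r s hs hrs hd => ?_⟩
  have hN2 : 2 ≤ ⌈(2:ℝ)/ε⌉₊ + 2 := by omega
  have hNε : 2 ≤ ε * (((⌈(2:ℝ)/ε⌉₊ + 2 : ℕ) : ℝ) - 1) := by
    have h1 : (2 : ℝ) / ε ≤ (⌈(2:ℝ)/ε⌉₊ : ℝ) := Nat.le_ceil _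
    have h2 : ((⌈(2:ℝ)/ε⌉₊ + 2 : ℕ) : ℝ) - 1 = (⌈(2:ℝ)/ε⌉₊ : ℝ) + 1 := by push_cast; ring
    rw [h2]
    have h3 : ε * ((2:ℝ)/ε) ≤ ε * ((⌈(2:ℝ)/ε⌉₊ : ℝ) + 1) := by
      apply mul_le_mul_of_nonneg_left _ (le_of_lt hε)
      linarith
    have h4 : ε * ((2:ℝ)/ε) = 2 := by field_simp
    linarith
  exact Nat.sInf_le (main_step n hn ε hε r s hrs hd _ hN2 hNε)
end

section
/- For all integers n ≥ 2 and r > s ≥ 1, R'(n;r,s) = A_{n-1}(r,s) + 1. Equivalently, the maximum N for which there exists an (r,s)-coloring of K_N in which every color class is (n-1)-partite equals the maximum size of an (n-1)-ary code of length r and Hamming distance s. -/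
section Aux

open Finset

/-- Pick an `s`-element subset of `A` if possible, otherwise any `s`-element set. -/
noncomputable def pickS (r s : ℕ) (A : Finset (Fin r)) : Finset (Fin r) :=
  if h : s ≤ A.card then (Finset.exists_subset_card_eq h).choose
  else if h2 : s ≤ (Finset.univ : Finset (Fin r)).card then
    (Finset.exists_subset_card_eq h2).choose
  else ∅

lemma pickS_card (r s : ℕ) (hsr : s ≤ r) (A : Finset (Fin r)) : (pickS r s A).card = s := by
  unfold pickS
  have h2 : s ≤ (Finset.univ : Finset (Fin r)).card := by simpa using hsr
  split_ifs with h
  · exact (Finset.exists_subset_card_eq h).choose_spec.2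
  · exact (Finset.exists_subset_card_eq h2).choose_spec.2

lemma pickS_subset (r s : ℕ) (A : Finset (Fin r)) (h : s ≤ A.card) : pickS r s A ⊆ A := by
  unfold pickS
  rw [dif_pos h]
  exact (Finset.exists_subset_card_eq h).choose_spec.1

end Aux

/-- Theorem 4: `R'(n;r,s) = A_{n-1}(r,s) + 1`. -/
theorem set_ramsey'_eq_maxCode (n r s : ℕ) (hn : 2 ≤ n) (hs : 1 ≤ s) (hsr : s < r) :
    setRamsey' n r s = maxCode (n - 1) r s + 1 := by
  classical
  set q := n - 1 with hqdef
  have hq1 : 1 ≤ q := by omega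
  have hqn : q < n := by omega
  set codeSet : Set ℕ := {M | ∃ C : Finset (Fin r → Fin q),
    (∀ x ∈ C, ∀ y ∈ C, x ≠ y → s ≤ hammingDist x y) ∧ C.card = M} with hcodeSet
  have hbdd : BddAbove codeSet := by
    refine ⟨Fintype.card (Fin r → Fin q), ?_⟩
    rintro M ⟨C, _, rfl⟩
    exact Finset.card_le_univ C
  have hne : codeSet.Nonempty := ⟨0, ∅, by simp⟩
  set M := maxCode q r s with hM
  have hMmem : M ∈ codeSet := Nat.sSup_mem hne hbdd
  obtain ⟨C, hC, hCcard⟩ := hMmem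
  -- Step A : M+1 belongs to the Ramsey set
  have hA : ∀ χ : Finset (Fin (M+1)) → Finset (Fin r), IsSetColoring (M+1) 2 r s χ →
      ∃ i : Fin r, (n : ℕ∞) ≤ (colorGraph (M+1) r χ i).chromaticNumber := by
    intro χ hχ
    by_contra hcon
    push_neg at hcon
    have hcol : ∀ i : Fin r, (colorGraph (M+1) r χ i).Colorable q := by
      intro i
      have hlt := hcon i
      have hnt : (colorGraph (M+1) r χ i).chromaticNumber ≠ ⊤ := ne_top_of_lt hlt
      lift (colorGraph (M+1) r χ i).chromaticNumber to ℕ using hnt with m hm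
      have hmn : m < n := by exact_mod_cast hlt
      have hle : (colorGraph (M+1) r χ i).chromaticNumber ≤ (m : ℕ∞) := le_of_eq hm.symm
      exact (SimpleGraph.chromaticNumber_le_iff_colorable.mp hle).mono (by omega)
    have f : ∀ i : Fin r, (colorGraph (M+1) r χ i).Coloring (Fin q) :=
      fun i => (hcol i).some
    set w : Fin (M+1) → (Fin r → Fin q) := fun v i => f i v with hw
    have hkey : ∀ u v : Fin (M+1), u ≠ v → ∀ i ∈ χ {u, v}, w u i ≠ w v i := by
      intro u v huv i hi
      exact (f i).valid ⟨huv, hi⟩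
    have hwinj : Function.Injective w := by
      intro u v huv
      by_contra hne'
      have hcard : ({u, v} : Finset (Fin (M+1))).card = 2 := Finset.card_pair hne'
      have hcs : (χ {u, v}).card = s := hχ _ hcard
      obtain ⟨i, hi⟩ := Finset.card_pos.mp (by omega : 0 < (χ {u, v}).card)
      exact hkey u v hne' i hi (by rw [huv])
    have hdist : ∀ u v : Fin (M+1), u ≠ v → s ≤ hammingDist (w u) (w v) := by
      intro u v huv
      have hcard : ({u, v} : Finset (Fin (M+1))).card = 2 := Finset.card_pair huv
      have hcs : (χ {u, v}).card = s := hχ _ hcard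
      have hsub : χ {u, v} ⊆ Finset.univ.filter (fun i => w u i ≠ w v i) := by
        intro i hi
        simp only [Finset.mem_filter, Finset.mem_univ, true_and]
        exact hkey u v huv i hi
      calc s = (χ {u, v}).card := hcs.symm
        _ ≤ _ := Finset.card_le_card hsub
    set D : Finset (Fin r → Fin q) := Finset.univ.image w with hD
    have hDcard : D.card = M + 1 := by
      rw [hD, Finset.card_image_of_injective _ hwinj, Finset.card_univ, Fintype.card_fin]
    have hmemD : M + 1 ∈ codeSet := by
      refine ⟨D, ?_, hDcard⟩
      intro x hx y hy hxy
      obtain ⟨u, _, rfl⟩ := Finset.mem_image.mp hx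
      obtain ⟨v, _, rfl⟩ := Finset.mem_image.mp hy
      exact hdist u v (fun h => hxy (by rw [h]))
    have : M + 1 ≤ M := le_csSup hbdd hmemD
    omega
  -- Step B : every N in the Ramsey set satisfies M+1 ≤ N
  have hB : ∀ N : ℕ, (∀ χ : Finset (Fin N) → Finset (Fin r), IsSetColoring N 2 r s χ →
      ∃ i : Fin r, (n : ℕ∞) ≤ (colorGraph N r χ i).chromaticNumber) → M + 1 ≤ N := by
    intro N hN
    by_contra hNM
    push_neg at hNM
    have hNle : N ≤ M := by omega
    set g : Fin M → {x // x ∈ C} := fun j => C.equivFin.symm (Fin.cast hCcard.symm j) with hg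
    have hginj : Function.Injective g := by
      intro a b hab
      have h2 := C.equivFin.symm.injective hab
      have h3 := congrArg Fin.val h2
      rw [Fin.coe_cast, Fin.coe_cast] at h3
      exact Fin.ext h3
    set w : Fin N → (Fin r → Fin q) := fun v => (g (Fin.castLE hNle v) : Fin r → Fin q) with hw
    have hwmem : ∀ v, w v ∈ C := fun v => (g (Fin.castLE hNle v)).2
    have hwinj : Function.Injective w := by
      intro u v huv
      have h1 : g (Fin.castLE hNle u) = g (Fin.castLE hNle v) := Subtype.ext huv
      exact Fin.castLE_injective hNle (hginj h1)
    have hdist : ∀ u v : Fin N, u ≠ v → s ≤ hammingDist (w u) (w v) :=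
      fun u v huv => hC _ (hwmem u) _ (hwmem v) (fun h => huv (hwinj h))
    set Dset : Finset (Fin N) → Finset (Fin r) :=
      fun e => Finset.univ.filter (fun i => ∃ u ∈ e, ∃ v ∈ e, w u i ≠ w v i) with hDset
    set χ : Finset (Fin N) → Finset (Fin r) := fun e => pickS r s (Dset e) with hχdef
    have hχcol : IsSetColoring N 2 r s χ := fun e _ => pickS_card r s hsr.le _
    have hedge : ∀ u v : Fin N, u ≠ v → ∀ i ∈ χ {u, v}, w u i ≠ w v i := by
      intro u v huv i hi
      have hsub : Finset.univ.filter (fun i => w u i ≠ w v i) ⊆ Dset {u, v} := by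
        intro j hj
        simp only [Finset.mem_filter, Finset.mem_univ, true_and] at hj
        simp only [hDset, Finset.mem_filter, Finset.mem_univ, true_and]
        exact ⟨u, by simp, v, by simp, hj⟩
      have hle : s ≤ (Dset {u, v}).card := by
        calc s ≤ hammingDist (w u) (w v) := hdist u v huv
          _ = (Finset.univ.filter (fun i => w u i ≠ w v i)).card := rfl
          _ ≤ _ := Finset.card_le_card hsub
      have hi' := pickS_subset r s _ hle hi
      simp only [hDset, Finset.mem_filter, Finset.mem_univ, true_and] at hi'
      obtain ⟨a, ha, b, hb, hab⟩ := hi'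
      simp only [Finset.mem_insert, Finset.mem_singleton] at ha hb
      rcases ha with rfl | rfl <;> rcases hb with rfl | rfl
      · exact absurd rfl hab
      · exact hab
      · exact fun h => hab h.symm
      · exact absurd rfl hab
    have hcolorable : ∀ i : Fin r, (colorGraph N r χ i).Colorable q := by
      intro i
      exact ⟨SimpleGraph.Coloring.mk (fun v => w v i)
        (fun {u v} hadj => hedge u v hadj.1 i hadj.2)⟩
    obtain ⟨i, hi⟩ := hN χ hχcol
    have hle : (colorGraph N r χ i).chromaticNumber ≤ (q : ℕ∞) :=
      (hcolorable i).chromaticNumber_le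
    have : (n : ℕ∞) ≤ (q : ℕ∞) := hi.trans hle
    have : n ≤ q := by exact_mod_cast this
    omega
  -- conclude
  have hAB : M + 1 ∈ {N | ∀ χ : Finset (Fin N) → Finset (Fin r), IsSetColoring N 2 r s χ →
      ∃ i : Fin r, (n : ℕ∞) ≤ (colorGraph N r χ i).chromaticNumber} := hA
  refine le_antisymm (Nat.sInf_le hAB) (le_csInf ⟨M + 1, hAB⟩ ?_)
  intro N hNmem
  exact hB N hNmem
end

section
/- For every integer n ≥ 3 and every real ε with 0 < ε < 1 - 1/(n-1), there exists a constant c > 0 such that for all integers r > s ≥ 1 with s ≤ (1 - 1/(n-1) - ε)·r, R(n;r,s) ≥ 2^{c·r}. -/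
open Finset

lemma sum_pow_dist (r q : ℕ) (hq : 1 ≤ q) (x : Fin r → Fin q) (L : ℝ) :
    ∑ y : Fin r → Fin q, L ^ hammingDist x y = (1 + ((q : ℝ) - 1) * L) ^ r := by
  have hterm : ∀ y : Fin r → Fin q,
      (∏ i, if x i = y i then (1:ℝ) else L) = L ^ hammingDist x y := by
    intro y
    rw [Finset.prod_ite]
    simp only [prod_const_one, prod_const, one_mul]
    rfl
  have hcoord : ∀ i : Fin r, (∑ a : Fin q, if x i = a then (1:ℝ) else L)
      = 1 + ((q : ℝ) - 1) * L := by
    intro i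
    rw [Finset.sum_ite]
    rw [Finset.filter_eq, if_pos (mem_univ _)]
    have : Finset.filter (fun a => ¬ x i = a) (univ : Finset (Fin q)) = univ \ {x i} := by
      ext a; simp [eq_comm, and_comm]
    rw [this]
    simp only [sum_const, card_singleton, smul_eq_mul, mul_one, Finset.card_sdiff_of_subset
      (by simp : {x i} ⊆ univ)]
    simp [Nat.cast_sub hq]
  have key := Finset.prod_univ_sum (fun _ : Fin r => (univ : Finset (Fin q)))
    (fun i a => if x i = a then (1:ℝ) else L)
  rw [Fintype.piFinset_univ] at key
  rw [Finset.sum_congr rfl fun y _ => (hterm y).symm, ← key,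
    Finset.prod_congr rfl fun i _ => hcoord i]
  simp

lemma ball_bound (r q : ℕ) (hq : 1 ≤ q) (x : Fin r → Fin q) (t : ℕ) (L : ℝ)
    (hL0 : 0 < L) (hL1 : L ≤ 1)
    (hsum : ∑ y : Fin r → Fin q, L ^ hammingDist x y = (1 + ((q : ℝ) - 1) * L) ^ r) :
    ((Finset.univ.filter fun y : Fin r → Fin q => hammingDist x y ≤ t).card : ℝ) * L ^ t
      ≤ (1 + ((q : ℝ) - 1) * L) ^ r := by
  rw [← hsum]
  calc ((Finset.univ.filter fun y : Fin r → Fin q => hammingDist x y ≤ t).card : ℝ) * L ^ t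
      = ∑ _y ∈ Finset.univ.filter (fun y : Fin r → Fin q => hammingDist x y ≤ t), L ^ t := by
        rw [Finset.sum_const, nsmul_eq_mul]
    _ ≤ ∑ y ∈ Finset.univ.filter (fun y : Fin r → Fin q => hammingDist x y ≤ t),
          L ^ hammingDist x y := by
        apply Finset.sum_le_sum
        intro y hy
        exact pow_le_pow_of_le_one hL0.le hL1 (Finset.mem_filter.mp hy).2
    _ ≤ ∑ y : Fin r → Fin q, L ^ hammingDist x y := by
        apply Finset.sum_le_sum_of_subset_of_nonneg (Finset.filter_subset _ _)
        intro y _ _; positivity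

lemma exists_code (r q s : ℕ) (hq : 1 ≤ q) (hs : 1 ≤ s) :
    ∃ C : Finset (Fin r → Fin q),
      (∀ x ∈ C, ∀ y ∈ C, x ≠ y → s ≤ hammingDist x y) ∧
      ∀ L : ℝ, 0 < L → L ≤ 1 →
        ((q : ℝ)) ^ r * L ^ (s - 1) ≤ (C.card : ℝ) * (1 + ((q : ℝ) - 1) * L) ^ r := by
  classical
  set P : Finset (Fin r → Fin q) → Prop :=
    fun C => ∀ x ∈ C, ∀ y ∈ C, x ≠ y → s ≤ hammingDist x y with hP
  have hne : ((univ : Finset (Finset (Fin r → Fin q))).filter P).Nonempty := by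
    refine ⟨∅, ?_⟩
    simp [hP]
  obtain ⟨C, hCmem, hCmax⟩ := Finset.exists_max_image _ Finset.card hne
  have hCP : P C := (Finset.mem_filter.mp hCmem).2
  refine ⟨C, hCP, ?_⟩
  -- covering property
  have hcover : ∀ y : Fin r → Fin q, ∃ x ∈ C, hammingDist x y ≤ s - 1 := by
    intro y
    by_contra hcon
    push_neg at hcon
    have hfar : ∀ x ∈ C, s ≤ hammingDist x y := by
      intro x hx
      have := hcon x hx
      omega
    have hyC : y ∉ C := by
      intro hy
      have := hfar y hy
      simp [hammingDist_self] at this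
      omega
    have hP' : P (insert y C) := by
      intro a ha b hb hab
      rcases Finset.mem_insert.mp ha with ha' | ha' <;>
        rcases Finset.mem_insert.mp hb with hb' | hb'
      · exact absurd (ha'.trans hb'.symm) hab
      · subst ha'; rw [hammingDist_comm]; exact hfar b hb'
      · subst hb'; exact hfar a ha'
      · exact hCP a ha' b hb' hab
    have hmem' : insert y C ∈ (univ : Finset (Finset (Fin r → Fin q))).filter P :=
      Finset.mem_filter.mpr ⟨Finset.mem_univ _, hP'⟩
    have := hCmax _ hmem'
    rw [Finset.card_insert_of_notMem hyC] at this
    omega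
  intro L hL0 hL1
  have hsub : (univ : Finset (Fin r → Fin q)) ⊆
      C.biUnion (fun x => univ.filter fun y => hammingDist x y ≤ s - 1) := by
    intro y _
    obtain ⟨x, hx, hxy⟩ := hcover y
    exact Finset.mem_biUnion.mpr ⟨x, hx, Finset.mem_filter.mpr ⟨Finset.mem_univ _, hxy⟩⟩
  have hcard : (q : ℕ) ^ r ≤ ∑ x ∈ C, (univ.filter fun y => hammingDist x y ≤ s - 1).card := by
    calc q ^ r = (univ : Finset (Fin r → Fin q)).card := by
          rw [Finset.card_univ, Fintype.card_fun]; simp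
      _ ≤ (C.biUnion (fun x => univ.filter fun y => hammingDist x y ≤ s - 1)).card :=
          Finset.card_le_card hsub
      _ ≤ ∑ x ∈ C, (univ.filter fun y => hammingDist x y ≤ s - 1).card :=
          Finset.card_biUnion_le
  have hLpow : (0:ℝ) < L ^ (s-1) := by positivity
  calc ((q : ℝ)) ^ r * L ^ (s - 1) ≤
      (∑ x ∈ C, ((univ.filter fun y => hammingDist x y ≤ s - 1).card : ℝ)) * L ^ (s-1) := by
        apply mul_le_mul_of_nonneg_right _ hLpow.le
        rw [← Nat.cast_sum]
        exact_mod_cast hcard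
    _ = ∑ x ∈ C, ((univ.filter fun y => hammingDist x y ≤ s - 1).card : ℝ) * L ^ (s-1) := by
        rw [Finset.sum_mul]
    _ ≤ ∑ _x ∈ C, (1 + ((q : ℝ) - 1) * L) ^ r := by
        apply Finset.sum_le_sum
        intro x _
        exact ball_bound r q hq x (s-1) L hL0 hL1 (sum_pow_dist r q hq x L)
    _ = (C.card : ℝ) * (1 + ((q : ℝ) - 1) * L) ^ r := by
        rw [Finset.sum_const, nsmul_eq_mul]

lemma pair_eq_cases {α : Type*} [DecidableEq α] {a b u v : α} (hab : a ≠ b)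
    (h : ({a, b} : Finset α) = {u, v}) : (a = u ∧ b = v) ∨ (a = v ∧ b = u) := by
  have ha : a ∈ ({u, v} : Finset α) := h ▸ (by simp)
  have hb : b ∈ ({u, v} : Finset α) := h ▸ (by simp)
  simp only [Finset.mem_insert, Finset.mem_singleton] at ha hb
  rcases ha with ha | ha <;> rcases hb with hb | hb
  · exact absurd (ha.trans hb.symm) hab
  · exact Or.inl ⟨ha, hb⟩
  · exact Or.inr ⟨ha, hb⟩
  · exact absurd (ha.trans hb.symm) hab

lemma no_mono (M n q r s : ℕ) (hqn : q < n) (hs : 1 ≤ s)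
    (f : Fin M → (Fin r → Fin q))
    (hf : ∀ u v : Fin M, u ≠ v → s ≤ hammingDist (f u) (f v)) :
    ∃ χ : Finset (Fin M) → Finset (Fin r),
      IsSetColoring M 2 r s χ ∧ ¬ HasMonoClique M 2 n r χ := by
  classical
  set D : Fin M → Fin M → Finset (Fin r) :=
    fun u v => univ.filter (fun i => f u i ≠ f v i) with hD
  have hDcard : ∀ u v, u ≠ v → s ≤ (D u v).card := fun u v h => hf u v h
  have hpick : ∀ u v : Fin M, u ≠ v → ∃ T : Finset (Fin r), T ⊆ D u v ∧ T.card = s :=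
    fun u v h => Finset.exists_subset_card_eq (hDcard u v h)
  set χ : Finset (Fin M) → Finset (Fin r) := fun e =>
    if h : ∃ p : Fin M × Fin M, p.1 ≠ p.2 ∧ e = {p.1, p.2} then
      (hpick h.choose.1 h.choose.2 h.choose_spec.1).choose
    else ∅ with hχ
  have hχ2 : ∀ e : Finset (Fin M), e.card = 2 →
      (χ e).card = s ∧ ∀ a b : Fin M, a ≠ b → e = {a, b} → χ e ⊆ D a b := by
    intro e he
    obtain ⟨x, y, hxy, hexy⟩ := Finset.card_eq_two.mp he
    have hex : ∃ p : Fin M × Fin M, p.1 ≠ p.2 ∧ e = {p.1, p.2} := ⟨(x, y), hxy, hexy⟩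
    have hspec := (hpick hex.choose.1 hex.choose.2 hex.choose_spec.1).choose_spec
    have hval : χ e = (hpick hex.choose.1 hex.choose.2 hex.choose_spec.1).choose := by
      rw [hχ]; exact dif_pos hex
    constructor
    · rw [hval]; exact hspec.2
    · intro a b hab heab
      rw [hval]
      refine hspec.1.trans ?_
      -- D u v ⊆ D a b when {u,v} = {a,b}
      have huv := hex.choose_spec.1
      have heq : ({a, b} : Finset (Fin M)) = {hex.choose.1, hex.choose.2} :=
        heab ▸ hex.choose_spec.2
      rcases pair_eq_cases hab heq with ⟨h1, h2⟩ | ⟨h1, h2⟩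
      · rw [← h1, ← h2]
      · rw [← h1, ← h2]
        intro i hi
        simp only [hD, Finset.mem_filter] at hi ⊢
        exact ⟨hi.1, hi.2.symm⟩
  refine ⟨χ, fun e he => (hχ2 e he).1, ?_⟩
  rintro ⟨S, hScard, c, hc⟩
  have hinj : Set.InjOn (fun x => f x c) (S : Set (Fin M)) := by
    intro a ha b hb hfeq
    by_contra hab
    have hsub : ({a, b} : Finset (Fin M)) ⊆ S := by
      intro x hx
      simp only [Finset.mem_insert, Finset.mem_singleton] at hx
      rcases hx with rfl | rfl
      · exact ha
      · exact hb
    have hcard2 : ({a, b} : Finset (Fin M)).card = 2 := Finset.card_pair hab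
    have hcmem := hc _ hsub hcard2
    have hDmem : c ∈ D a b := (hχ2 _ hcard2).2 a b hab rfl hcmem
    simp only [hD, Finset.mem_filter] at hDmem
    exact hDmem.2 hfeq
  have := Finset.card_le_card_of_injOn (fun x => f x c)
    (fun a _ => Finset.mem_univ (f a c)) hinj
  rw [hScard, Finset.card_univ, Fintype.card_fin] at this
  omega

lemma mono_seq {V : Type*} [DecidableEq V] (r : ℕ) (hr : 1 ≤ r) (col : V → V → Fin r) :
    ∀ (m : ℕ) (A : Finset V), (r + 1) ^ m ≤ A.card →
      ∃ (v : Fin m → V) (c : Fin m → Fin r), (∀ i, v i ∈ A) ∧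
        ∀ i j : Fin m, i < j → v i ≠ v j ∧ col (v i) (v j) = c i := by
  intro m
  induction m with
  | zero =>
    intro A _
    exact ⟨Fin.elim0, Fin.elim0, fun i => i.elim0, fun i => i.elim0⟩
  | succ m ih =>
    intro A hA
    have hAne : A.Nonempty := by
      apply Finset.card_pos.mp
      have : 1 ≤ (r+1)^(m+1) := Nat.one_le_pow _ _ (by omega)
      omega
    obtain ⟨a, ha⟩ := hAne
    set A' := A.erase a with hA'
    have hA'card : r * (r+1)^m ≤ A'.card := by
      have h1 : A'.card = A.card - 1 := Finset.card_erase_of_mem ha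
      have h2 : (r+1)^(m+1) = r * (r+1)^m + (r+1)^m := by ring
      have h3 : 1 ≤ (r+1)^m := Nat.one_le_pow _ _ (by omega)
      omega
    obtain ⟨c0, _, hc0⟩ := Finset.exists_le_card_fiber_of_mul_le_card_of_maps_to
      (f := fun x => col a x) (t := (univ : Finset (Fin r)))
      (fun x _ => Finset.mem_univ _)
      ⟨⟨0, by omega⟩, Finset.mem_univ _⟩
      (by rw [Finset.card_univ, Fintype.card_fin]; exact hA'card)
    set B := (A'.filter fun x => col a x = c0) with hB
    obtain ⟨v', c', hv'A, hv'⟩ := ih B hc0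
    have hvB : ∀ j, v' j ∈ B := hv'A
    have hvA' : ∀ j, v' j ∈ A' := fun j => Finset.mem_of_mem_filter _ (hvB j)
    refine ⟨Fin.cons a v', Fin.cons c0 c', ?_, ?_⟩
    · intro i
      refine Fin.cases ?_ ?_ i
      · simpa using ha
      · intro j
        simp only [Fin.cons_succ]
        exact Finset.mem_of_mem_erase (hvA' j)
    · intro i j hij
      rcases Fin.eq_zero_or_eq_succ i with rfl | ⟨i', rfl⟩ <;>
        rcases Fin.eq_zero_or_eq_succ j with rfl | ⟨j', rfl⟩
      · exact absurd hij (lt_irrefl _)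
      · simp only [Fin.cons_zero, Fin.cons_succ]
        constructor
        · intro heq
          exact Finset.ne_of_mem_erase (hvA' j') heq.symm
        · exact (Finset.mem_filter.mp (hvB j')).2
      · exact absurd hij (by simp [Fin.lt_def])
      · simp only [Fin.cons_succ]
        exact hv' i' j' (by simpa [Fin.succ_lt_succ_iff] using hij)

lemma ramsey_mem_s11 (n r s : ℕ) (hn : 2 ≤ n) (hr : 1 ≤ r) (hs : 1 ≤ s) :
    ∀ χ : Finset (Fin ((r+1)^(r*(n-1)+1))) → Finset (Fin r),
      IsSetColoring ((r+1)^(r*(n-1)+1)) 2 r s χ → HasMonoClique ((r+1)^(r*(n-1)+1)) 2 n r χ := by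
  classical
  intro χ hχ
  set col : Fin ((r+1)^(r*(n-1)+1)) → Fin ((r+1)^(r*(n-1)+1)) → Fin r := fun u v =>
    if h : (χ {u, v}).Nonempty then (χ {u, v}).min' h else ⟨0, hr⟩ with hcol
  have hcolmem : ∀ u v, u ≠ v → col u v ∈ χ {u, v} := by
    intro u v huv
    have h2 : ({u, v} : Finset (Fin ((r+1)^(r*(n-1)+1)))).card = 2 := Finset.card_pair huv
    have hne : (χ {u, v}).Nonempty := by
      rw [← Finset.card_pos, hχ _ h2]; omega
    simp only [hcol, dif_pos hne]
    exact Finset.min'_mem _ hne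
  obtain ⟨v, c, hvA, hv⟩ := mono_seq r hr col (r*(n-1)+1) (univ : Finset (Fin ((r+1)^(r*(n-1)+1))))
    (by rw [Finset.card_univ, Fintype.card_fin])
  obtain ⟨c0, _, hc0⟩ := Finset.exists_lt_card_fiber_of_mul_lt_card_of_maps_to
    (f := c) (t := (univ : Finset (Fin r))) (s := (univ : Finset (Fin (r*(n-1)+1))))
    (n := n - 1)
    (fun x _ => Finset.mem_univ _)
    (by rw [Finset.card_univ, Fintype.card_fin, Finset.card_univ, Fintype.card_fin]; omega)
  have hnle : n ≤ ((univ : Finset (Fin (r*(n-1)+1))).filter fun i => c i = c0).card := by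
    omega
  obtain ⟨I, hIsub, hIcard⟩ := Finset.exists_subset_card_eq hnle
  have hvinj : ∀ i ∈ I, ∀ j ∈ I, i ≠ j → v i ≠ v j := by
    intro i _ j _ hij
    rcases lt_or_gt_of_ne hij with h | h
    · exact (hv i j h).1
    · exact fun heq => (hv j i h).1 heq.symm
  refine ⟨I.image v, ?_, c0, ?_⟩
  · rw [Finset.card_image_of_injOn (fun i hi j hj hij => by
      by_contra hne; exact hvinj i hi j hj hne hij), hIcard]
  · intro e hesub hecard
    obtain ⟨x, y, hxy, rfl⟩ := Finset.card_eq_two.mp hecard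
    have hx := hesub (by simp : x ∈ ({x, y} : Finset _))
    have hy := hesub (by simp : y ∈ ({x, y} : Finset _))
    obtain ⟨i, hi, rfl⟩ := Finset.mem_image.mp hx
    obtain ⟨j, hj, rfl⟩ := Finset.mem_image.mp hy
    have hij : i ≠ j := fun h => hxy (by rw [h])
    have hci : c i = c0 := (Finset.mem_filter.mp (hIsub hi)).2
    have hcj : c j = c0 := (Finset.mem_filter.mp (hIsub hj)).2
    rcases lt_or_gt_of_ne hij with h | h
    · have := (hv i j h).2
      have hmem := hcolmem (v i) (v j) (hv i j h).1
      rw [this, hci] at hmem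
      exact hmem
    · have := (hv j i h).2
      have hmem := hcolmem (v j) (v i) (hv j i h).1
      rw [this, hcj] at hmem
      rwa [Finset.pair_comm]

lemma key_ineq (Q ε δ η c L : ℝ) (hQ : 2 ≤ Q) (hε0 : 0 < ε) (hδ0 : 0 < δ)
    (hδε : δ + ε = 1 - 1/Q) (hη : η = ε/(2+ε)) (hc : c = η*ε/(2*Real.log 2))
    (hL : L = 1 - η) :
    (2:ℝ)^c * (1 + (Q-1)*L) ≤ Q * L ^ δ := by
  have hQ0 : (0:ℝ) < Q := by linarith
  have hη0 : 0 < η := by rw [hη]; positivity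
  have hη1 : η < 1 := by
    rw [hη]
    rw [div_lt_one (by linarith)]
    linarith
  have hL0 : 0 < L := by rw [hL]; linarith
  have hL1 : L < 1 := by rw [hL]; linarith
  have hδ1 : δ ≤ 1 := by
    have h1 : 0 < 1/Q := by positivity
    linarith
  have hee : ε = η * (2 + ε) := by
    rw [hη]; field_simp
  have h2c : (2:ℝ)^c = Real.exp (η*ε/2) := by
    rw [Real.rpow_def_of_pos (by norm_num : (0:ℝ) < 2)]
    congr 1
    rw [hc]
    have hlog2 : Real.log 2 ≠ 0 := (Real.log_pos (by norm_num)).ne'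
    field_simp
  have hstep1 : 1 + (Q-1)*L = Q*(1-(δ+ε)*η) := by
    rw [hδε, hL]
    field_simp
    ring
  have hLδ : L ^ δ = Real.exp (δ * Real.log L) :=
    (Real.rpow_def_of_pos hL0 δ).trans (by rw [mul_comm])
  have hlog : -(η/L) ≤ Real.log L := by
    have hLne : L ≠ 0 := hL0.ne'
    have h1 : 1 + η/L = 1/L := by
      rw [hL]
      have : (1:ℝ) - η ≠ 0 := by linarith
      field_simp
      ring
    have h2 : 1/L ≤ Real.exp (η/L) := by
      have := Real.add_one_le_exp (η/L)
      linarith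
    have h3 : Real.log (1/L) ≤ η/L := (Real.log_le_iff_le_exp (by positivity)).mpr h2
    rw [one_div, Real.log_inv] at h3
    linarith
  have hexp_ineq : η*ε/2 - (δ+ε)*η ≤ δ * Real.log L := by
    have h2 : δ * (-(η/L)) ≤ δ * Real.log L := mul_le_mul_of_nonneg_left hlog hδ0.le
    have h4 : ε*(1-η) = 2*η := by linear_combination hee
    have h3 : η*ε/2 - (δ+ε)*η ≤ (δ * -η)/L := by
      rw [le_div_iff₀ hL0, hL]
      nlinarith [h4, sq_nonneg η, mul_nonneg (by linarith : (0:ℝ) ≤ 1-δ) (sq_nonneg η),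
        mul_pos hη0 hη0]
    have h5 : δ * (-(η/L)) = (δ * -η)/L := by ring
    linarith [h5 ▸ h3]
  have hA : 1-(δ+ε)*η ≤ Real.exp (-((δ+ε)*η)) := by
    have := Real.add_one_le_exp (-((δ+ε)*η))
    linarith
  calc (2:ℝ)^c * (1 + (Q-1)*L) = Q * (Real.exp (η*ε/2) * (1-(δ+ε)*η)) := by
        rw [h2c, hstep1]; ring
    _ ≤ Q * (Real.exp (η*ε/2) * Real.exp (-((δ+ε)*η))) := by
        apply mul_le_mul_of_nonneg_left _ hQ0.le
        exact mul_le_mul_of_nonneg_left hA (Real.exp_pos _).le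
    _ = Q * Real.exp (η*ε/2 - (δ+ε)*η) := by rw [← Real.exp_add]; ring_nf
    _ ≤ Q * Real.exp (δ * Real.log L) := by
        apply mul_le_mul_of_nonneg_left _ hQ0.le
        exact Real.exp_le_exp.mpr hexp_ineq
    _ = Q * L ^ δ := by rw [hLδ]


/-- For `s/r ≤ 1 - 1/(n-1) - ε`, the set-coloring Ramsey number grows
exponentially in `r`. -/
theorem set_ramsey_exponential (n : ℕ) (hn : 3 ≤ n) (ε : ℝ) (hε0 : 0 < ε)
    (hε1 : ε < 1 - 1 / ((n : ℝ) - 1)) :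
    ∃ c : ℝ, 0 < c ∧ ∀ r s : ℕ, 1 ≤ s → s < r →
      (s : ℝ) ≤ (1 - 1 / ((n : ℝ) - 1) - ε) * r →
      (2 : ℝ) ^ (c * r) ≤ (setRamsey 2 n r s : ℝ) := by
  classical
  set q : ℕ := n - 1 with hqdef
  have hq2 : 2 ≤ q := by omega
  have hQcast : ((q : ℕ) : ℝ) = (n : ℝ) - 1 := by
    rw [hqdef, Nat.cast_sub (by omega : 1 ≤ n)]; norm_num
  set Q : ℝ := ((q : ℕ) : ℝ) with hQdef
  have hQ2 : (2:ℝ) ≤ Q := by rw [hQdef]; exact_mod_cast hq2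
  have hQ0 : (0:ℝ) < Q := by linarith
  set δ : ℝ := 1 - 1/Q - ε with hδdef
  have hδ0 : 0 < δ := by
    rw [hδdef]
    rw [← hQcast] at hε1
    linarith
  set η : ℝ := ε/(2+ε) with hηdef
  have hη0 : 0 < η := by rw [hηdef]; positivity
  have hη1 : η < 1 := by
    rw [hηdef, div_lt_one (by linarith)]; linarith
  set c : ℝ := η*ε/(2*Real.log 2) with hcdef
  have hlog2 : 0 < Real.log 2 := Real.log_pos (by norm_num)
  have hc0 : 0 < c := by rw [hcdef]; positivity
  refine ⟨c, hc0, ?_⟩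
  intro r s hs1 hsr hsle
  rw [← hQcast] at hsle
  have hsle' : (s:ℝ) ≤ δ * r := by rw [hδdef]; exact hsle
  have hr1 : 1 ≤ r := by omega
  set L : ℝ := 1 - η with hLdef
  have hL0 : 0 < L := by rw [hLdef]; linarith
  have hL1 : L ≤ 1 := by rw [hLdef]; linarith
  -- the Ramsey set is nonempty
  have hset_ne : {N | ∀ χ : Finset (Fin N) → Finset (Fin r),
      IsSetColoring N 2 r s χ → HasMonoClique N 2 n r χ}.Nonempty :=
    ⟨(r+1)^(r*(n-1)+1), ramsey_mem_s11 n r s (by omega) hr1 hs1⟩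
  have hM : ∀ χ : Finset (Fin (setRamsey 2 n r s)) → Finset (Fin r),
      IsSetColoring (setRamsey 2 n r s) 2 r s χ →
      HasMonoClique (setRamsey 2 n r s) 2 n r χ := Nat.sInf_mem hset_ne
  -- the code
  obtain ⟨C, hCdist, hCbound⟩ := exists_code r q s (by omega) hs1
  have hbound := hCbound L hL0 hL1
  have hkey : (2:ℝ)^c * (1 + (Q-1)*L) ≤ Q * L ^ δ :=
    key_ineq Q ε δ η c L hQ2 hε0 hδ0 (by rw [hδdef]; ring) hηdef hcdef hLdef
  have hBase0 : (0:ℝ) < 1 + (Q-1)*L := by nlinarith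
  have hB0 : (0:ℝ) < (1 + (Q-1)*L)^r := by positivity
  -- chain of inequalities
  have hLrs : (L^δ)^r ≤ L^(s-1) := by
    have e1 : (L^δ)^r = L^(δ * r) := by
      rw [← Real.rpow_natCast (L^δ) r, ← Real.rpow_mul hL0.le]
    have e2 : L^(δ * r) ≤ L^(((s-1:ℕ):ℝ)) := by
      apply Real.rpow_le_rpow_of_exponent_ge hL0 hL1
      have h1 : ((s-1:ℕ):ℝ) ≤ (s:ℝ) := by exact_mod_cast Nat.sub_le s 1
      linarith [hsle', h1]
    rw [e1]
    calc L^(δ * r) ≤ L^(((s-1:ℕ):ℝ)) := e2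
      _ = L^(s-1) := Real.rpow_natCast L (s-1)
  have hchain : ((2:ℝ)^c)^r * (1 + (Q-1)*L)^r ≤ (C.card : ℝ) * (1 + (Q-1)*L)^r := by
    calc ((2:ℝ)^c)^r * (1 + (Q-1)*L)^r = ((2:ℝ)^c * (1 + (Q-1)*L))^r := (mul_pow _ _ _).symm
      _ ≤ (Q * L^δ)^r := by
          apply pow_le_pow_left₀ _ hkey
          positivity
      _ = Q^r * (L^δ)^r := mul_pow _ _ _
      _ ≤ Q^r * L^(s-1) := by
          apply mul_le_mul_of_nonneg_left hLrs (by positivity)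
      _ ≤ (C.card : ℝ) * (1 + (Q-1)*L)^r := hbound
  have hC2 : ((2:ℝ)^c)^r ≤ (C.card : ℝ) := le_of_mul_le_mul_right hchain hB0
  -- C.card ≤ setRamsey
  have hCM : C.card ≤ setRamsey 2 n r s := by
    by_contra hcon
    push_neg at hcon
    obtain ⟨C', hC'sub, hC'card⟩ := Finset.exists_subset_card_eq hcon.le
    set f : Fin (setRamsey 2 n r s) → (Fin r → Fin q) :=
      fun i => ((C'.equivFin.symm (Fin.cast hC'card.symm i)) : Fin r → Fin q) with hfdef
    have hfC : ∀ i, f i ∈ C := fun i =>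
      hC'sub (C'.equivFin.symm (Fin.cast hC'card.symm i)).2
    have hfpair : ∀ u v, u ≠ v → s ≤ hammingDist (f u) (f v) := by
      intro u v huv
      apply hCdist _ (hfC u) _ (hfC v)
      intro heq
      apply huv
      have := C'.equivFin.symm.injective (Subtype.ext heq)
      simpa [Fin.ext_iff] using congrArg Fin.val this
    obtain ⟨χ, hχ1, hχ2⟩ := no_mono (setRamsey 2 n r s) n q r s (by omega) hs1 f hfpair
    exact hχ2 (hM χ hχ1)
  -- conclude
  have hfinal : (2:ℝ)^(c * (r:ℝ)) = ((2:ℝ)^c)^r := by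
    rw [Real.rpow_mul (by norm_num : (0:ℝ) ≤ 2), Real.rpow_natCast]
  calc (2:ℝ)^(c * (r:ℝ)) = ((2:ℝ)^c)^r := hfinal
    _ ≤ (C.card : ℝ) := hC2
    _ ≤ (setRamsey 2 n r s : ℝ) := by exact_mod_cast hCM
end

section
/- Let k < d be positive integers and let q be a prime power. Set n = q^{d-k} + 1, r = ∏_{i=0}^{k-1} (q^{d-i} - 1)/(q^{k-i} - 1) (the Gaussian binomial coefficient counting k-dimensional subspaces of F_q^d), and s = (1 - (q^k - 1)/(q^d - 1))·r (which is an integer). Then R(n;r,s) = R'(n;r,s) = A_{n-1}(r,s) + 1 = q^d + 1. -/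
section Aux

open Finset Module SimpleGraph

instance (N r : ℕ) (χ : Finset (Fin N) → Finset (Fin r)) (i : Fin r) :
    DecidableRel (colorGraph N r χ i).Adj := fun u v =>
  inferInstanceAs (Decidable (u ≠ v ∧ i ∈ χ {u, v}))

lemma turan_deg_sum : ∀ (m : ℕ) (V : Type) [Fintype V] (G : SimpleGraph V)
    [DecidableRel G.Adj], G.CliqueFree (m + 1) →
    m * (∑ v, G.degree v) ≤ (m - 1) * (Fintype.card V)^2 := by
  intro m
  induction m with
  | zero => intro V _ G _ _; simp
  | succ m ih =>
    intro V _ G _ hfree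
    classical
    rcases Nat.eq_zero_or_pos m with rfl | hm
    · have hbot : G = ⊥ := cliqueFree_two.mp hfree
      have hd0 : ∀ v : V, G.degree v = 0 := by
        intro v
        rw [SimpleGraph.degree, Finset.card_eq_zero, Finset.eq_empty_iff_forall_notMem]
        intro u hu
        rw [SimpleGraph.mem_neighborFinset, hbot] at hu
        exact hu
      simp [hd0]
    · obtain ⟨m', rfl⟩ : ∃ m', m = m' + 1 := ⟨m-1, by omega⟩
      rcases isEmpty_or_nonempty V with hV | hV
      · simp [Finset.univ_eq_empty]
      obtain ⟨x, -, hx⟩ := Finset.exists_max_image Finset.univ (fun v => G.degree v)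
        ⟨Classical.arbitrary V, Finset.mem_univ _⟩
      set N := Fintype.card V with hN
      set Δ := G.degree x with hΔ
      have hxd : ∀ v : V, G.degree v ≤ Δ := fun v => hx v (Finset.mem_univ v)
      set s : Finset V := G.neighborFinset x with hsdef
      have hscard : s.card = Δ := rfl
      have hΔN : Δ ≤ N := by rw [← hscard]; exact Finset.card_le_univ s
      let H : SimpleGraph {v // v ∈ s} := G.comap Subtype.val
      haveI : DecidableRel H.Adj := fun a b =>
        Classical.dec _
      have hHfree : H.CliqueFree (m' + 2) := by
        intro t ht
        have ht' : G.IsNClique (m'+2) (t.map ⟨Subtype.val, Subtype.val_injective⟩) := by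
          constructor
          · intro u hu v hv huv
            simp only [Finset.coe_map, Set.mem_image, Finset.mem_coe] at hu hv
            obtain ⟨u', hu', rfl⟩ := hu
            obtain ⟨v', hv', rfl⟩ := hv
            exact ht.1 hu' hv' (fun h => huv (by rw [h]))
          · rw [Finset.card_map]; exact ht.2
        have hxt : ∀ b ∈ t.map ⟨Subtype.val, Subtype.val_injective⟩, G.Adj x b := by
          intro b hb
          simp only [Finset.mem_map, Function.Embedding.coeFn_mk] at hb
          obtain ⟨⟨b', hb'⟩, -, rfl⟩ := hb
          exact (G.mem_neighborFinset x b').mp hb'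
        exact hfree _ (ht'.insert hxt)
      have ihH := ih _ H hHfree
      have hcards : Fintype.card {v // v ∈ s} = Δ := by rw [Fintype.card_coe, hscard]
      rw [hcards] at ihH
      -- degree of H vertices
      have hdegH : ∀ w : {v // v ∈ s}, H.degree w = ((G.neighborFinset w.1).filter (· ∈ s)).card := by
        intro w
        rw [SimpleGraph.degree, ← Finset.card_subtype]
        congr 1
        ext u
        simp only [mem_neighborFinset, Finset.mem_subtype, Finset.mem_filter, comap_adj, H]
      set g : V → ℕ := fun v => ((G.neighborFinset v).filter (· ∈ s)).card with hg
      have hOEH : ∑ w : {v // v ∈ s}, H.degree w = ∑ v ∈ s, g v := by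
        rw [Finset.univ_eq_attach]
        rw [← Finset.sum_attach s g]
        exact Finset.sum_congr rfl (fun w _ => hdegH w)
      have hdegb : ∀ v : V, G.degree v ≤ g v + (N - Δ) := by
        intro v
        have hsum := Finset.card_filter_add_card_filter_not
          (s := G.neighborFinset v) (p := (· ∈ s))
        have hsub : (G.neighborFinset v).filter (fun u => ¬ u ∈ s) ⊆ Finset.univ \ s := by
          intro u hu
          rw [Finset.mem_filter] at hu
          rw [Finset.mem_sdiff]
          exact ⟨Finset.mem_univ _, hu.2⟩
        have h2 : ((G.neighborFinset v).filter (fun u => ¬ u ∈ s)).card ≤ N - Δ := by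
          have hc := Finset.card_le_card hsub
          rwa [Finset.card_sdiff_of_subset (Finset.subset_univ s), Finset.card_univ, hscard] at hc
        have hdv : G.degree v = ((G.neighborFinset v).filter (· ∈ s)).card
            + ((G.neighborFinset v).filter (fun u => ¬ u ∈ s)).card := by
          rw [SimpleGraph.degree, ← hsum]
        have hgv : g v = ((G.neighborFinset v).filter (· ∈ s)).card := rfl
        omega
      -- split the sum
      have hsplit : ∑ v, G.degree v ≤ (∑ v ∈ s, g v) + Δ * (N - Δ) + (N - Δ) * Δ := by
        have e1 : ∑ v ∈ Finset.univ \ s, G.degree v + ∑ v ∈ s, G.degree v = ∑ v, G.degree v :=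
          Finset.sum_sdiff (Finset.subset_univ s)
        have b1 : ∑ v ∈ s, G.degree v ≤ (∑ v ∈ s, g v) + Δ * (N - Δ) := by
          calc ∑ v ∈ s, G.degree v ≤ ∑ v ∈ s, (g v + (N - Δ)) :=
                Finset.sum_le_sum (fun v _ => hdegb v)
            _ = (∑ v ∈ s, g v) + Δ * (N - Δ) := by
                rw [Finset.sum_add_distrib, Finset.sum_const, hscard, smul_eq_mul]
        have b2 : ∑ v ∈ Finset.univ \ s, G.degree v ≤ (N - Δ) * Δ := by
          have : ∀ v ∈ Finset.univ \ s, G.degree v ≤ Δ := fun v _ => hxd v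
          calc ∑ v ∈ Finset.univ \ s, G.degree v ≤ (Finset.univ \ s).card * Δ := by
                apply Finset.sum_le_card_nsmul _ _ _ this
            _ = (N - Δ) * Δ := by rw [Finset.card_sdiff_of_subset (Finset.subset_univ s), Finset.card_univ, hscard]
        omega
      set A := ∑ v ∈ s, g v with hA
      set B := ∑ v, G.degree v with hB
      rw [hOEH] at ihH
      have key : (m'+1) * ((m'+2) * B) ≤ (m'+1) * ((m'+1) * N^2) := by
        calc (m'+1) * ((m'+2) * B) = (m'+2) * ((m'+1) * B) := by ring
          _ ≤ (m'+2) * ((m'+1) * (A + Δ * (N - Δ) + (N - Δ) * Δ)) := by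
              apply Nat.mul_le_mul_left
              apply Nat.mul_le_mul_left
              exact hsplit
          _ = (m'+2) * ((m'+1) * A) + 2*(m'+1)*(m'+2)*(Δ*(N-Δ)) := by ring
          _ ≤ (m'+2) * (m' * Δ^2) + 2*(m'+1)*(m'+2)*(Δ*(N-Δ)) := by
              apply Nat.add_le_add_right
              apply Nat.mul_le_mul_left
              simpa using ihH
          _ ≤ (m'+1) * ((m'+1) * N^2) := by
              zify [hΔN]
              nlinarith [sq_nonneg ((m'+1:ℤ)*N - (m'+2:ℤ)*Δ), sq_nonneg ((Δ:ℤ)), hΔN]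
      have hfin := Nat.le_of_mul_le_mul_left key (by omega : 0 < m'+1)
      simpa using hfin





lemma color_deg_sum (N r s : ℕ) (χ : Finset (Fin N) → Finset (Fin r))
    (hχ : IsSetColoring N 2 r s χ) :
    ∑ i : Fin r, ∑ v, (colorGraph N r χ i).degree v = N * ((N - 1) * s) := by
  rw [Finset.sum_comm]
  have hrow : ∀ v : Fin N, ∑ i : Fin r, (colorGraph N r χ i).degree v = (N - 1) * s := by
    intro v
    have hdeg : ∀ i : Fin r, (colorGraph N r χ i).degree v =
        ∑ u : Fin N, (if (colorGraph N r χ i).Adj v u then 1 else 0) := by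
      intro i
      rw [SimpleGraph.degree, SimpleGraph.neighborFinset_eq_filter, Finset.card_filter]
    calc ∑ i : Fin r, (colorGraph N r χ i).degree v
        = ∑ i : Fin r, ∑ u : Fin N, (if (colorGraph N r χ i).Adj v u then 1 else 0) :=
          Finset.sum_congr rfl (fun i _ => hdeg i)
      _ = ∑ u : Fin N, ∑ i : Fin r, (if (colorGraph N r χ i).Adj v u then 1 else 0) :=
          Finset.sum_comm
      _ = ∑ u : Fin N, (if v = u then 0 else s) := by
          apply Finset.sum_congr rfl
          intro u _
          by_cases h : v = u
          · subst h
            simp [colorGraph]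
          · simp only [if_neg h]
            have hcard : ({v, u} : Finset (Fin N)).card = 2 := Finset.card_pair h
            calc ∑ i : Fin r, (if (colorGraph N r χ i).Adj v u then 1 else 0)
                = ∑ i : Fin r, (if i ∈ χ {v, u} then 1 else 0) := by
                  apply Finset.sum_congr rfl
                  intro i _
                  congr 1
                  simp [colorGraph, h]
              _ = (χ {v, u}).card := by
                  rw [Finset.sum_ite_mem, Finset.univ_inter, Finset.sum_const, smul_eq_mul,
                    mul_one]
              _ = s := hχ _ hcard
      _ = (N - 1) * s := by
          rw [Finset.sum_ite]
          simp only [Finset.sum_const, smul_eq_mul, mul_zero, zero_add, smul_eq_mul]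
          congr 1
          have : Finset.univ.filter (fun u => ¬ v = u) = Finset.univ.erase v := by
            ext u
            simp [eq_comm, Finset.mem_erase]
          rw [this, Finset.card_erase_of_mem (Finset.mem_univ v), Finset.card_univ,
            Fintype.card_fin]
  rw [Finset.sum_congr rfl (fun v _ => hrow v), Finset.sum_const, Finset.card_univ,
    Fintype.card_fin, smul_eq_mul]


lemma plotkin (a b r s : ℕ) (ha : 2 ≤ a) (hb : 2 ≤ b) (hr : 1 ≤ r)
    (hs : s * (a*b - 1) = r * (a*b - a)) (C : Finset (Fin r → Fin b))
    (hC : ∀ x ∈ C, ∀ y ∈ C, x ≠ y → s ≤ hammingDist x y) : C.card ≤ a*b := by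
  classical
  set M := C.card with hM
  rcases Nat.eq_zero_or_pos M with h0 | hM1
  · omega
  set T := ∑ x ∈ C, ∑ y ∈ C, hammingDist x y with hT
  have hlow : M * ((M-1) * s) ≤ T := by
    rw [hT]
    have hx1 : ∀ x ∈ C, (M-1) * s ≤ ∑ y ∈ C, hammingDist x y := by
      intro x hx
      have hsplit : ∑ y ∈ C, hammingDist x y
          = hammingDist x x + ∑ y ∈ C.erase x, hammingDist x y :=
        (Finset.add_sum_erase C _ hx).symm
      have hbound : (C.erase x).card * s ≤ ∑ y ∈ C.erase x, hammingDist x y := by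
        rw [← Finset.sum_const_nat (m := s) (fun y hy => rfl)]
        exact Finset.sum_le_sum (fun y hy => hC x hx y (Finset.mem_of_mem_erase hy)
          (fun hxy => (Finset.ne_of_mem_erase hy) hxy.symm))
      rw [Finset.card_erase_of_mem hx, ← hM] at hbound
      rw [hsplit, hammingDist_self]
      omega
    calc M * ((M-1) * s) = ∑ _x ∈ C, (M-1)*s := by rw [Finset.sum_const, smul_eq_mul, ← hM]
      _ ≤ _ := Finset.sum_le_sum hx1
  have hswap : T = ∑ i : Fin r, ∑ x ∈ C, ∑ y ∈ C, (if x i ≠ y i then 1 else 0) := by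
    rw [hT]
    calc ∑ x ∈ C, ∑ y ∈ C, hammingDist x y
        = ∑ x ∈ C, ∑ y ∈ C, ∑ i : Fin r, (if x i ≠ y i then 1 else 0) := by
          apply Finset.sum_congr rfl
          intro x _
          apply Finset.sum_congr rfl
          intro y _
          rw [hammingDist, Finset.card_filter]
      _ = ∑ x ∈ C, ∑ i : Fin r, ∑ y ∈ C, (if x i ≠ y i then 1 else 0) :=
          Finset.sum_congr rfl (fun x _ => Finset.sum_comm)
      _ = ∑ i : Fin r, ∑ x ∈ C, ∑ y ∈ C, (if x i ≠ y i then 1 else 0) := Finset.sum_comm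
  have hcoord : ∀ i : Fin r,
      b * (∑ x ∈ C, ∑ y ∈ C, (if x i ≠ y i then 1 else 0)) ≤ (b-1) * (M*M) := by
    intro i
    set D := ∑ x ∈ C, ∑ y ∈ C, (if x i ≠ y i then 1 else 0) with hD
    set E := ∑ x ∈ C, ∑ y ∈ C, (if x i = y i then 1 else 0) with hE
    have hDE : D + E = M * M := by
      rw [hD, hE, ← Finset.sum_add_distrib]
      have hrow : ∀ x ∈ C, ((∑ y ∈ C, (if x i ≠ y i then 1 else 0))
          + ∑ y ∈ C, (if x i = y i then 1 else 0)) = M := by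
        intro x _
        rw [← Finset.sum_add_distrib]
        have : ∀ y ∈ C, ((if x i ≠ y i then 1 else 0) + (if x i = y i then 1 else 0)) = 1 := by
          intro y _
          by_cases h : x i = y i <;> simp [h]
        rw [Finset.sum_congr rfl this, Finset.sum_const, smul_eq_mul, mul_one, ← hM]
      rw [Finset.sum_congr rfl hrow, Finset.sum_const, smul_eq_mul, ← hM]
    have hfib : E = ∑ c : Fin b, ((C.filter (fun x => x i = c)).card)^2 := by
      have h1 : E = ∑ x ∈ C, (C.filter (fun y => y i = x i)).card := by
        rw [hE]
        apply Finset.sum_congr rfl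
        intro x _
        rw [Finset.card_filter]
        apply Finset.sum_congr rfl
        intro y _
        congr 1
        simp [eq_comm]
      rw [h1, ← Finset.sum_fiberwise_of_maps_to (g := fun x => x i) (t := Finset.univ)
        (fun x _ => Finset.mem_univ _)]
      apply Finset.sum_congr rfl
      intro c _
      have h2 : ∀ x ∈ C.filter (fun x => x i = c),
          (C.filter (fun y => y i = x i)).card = (C.filter (fun y => y i = c)).card := by
        intro x hx
        rw [(Finset.mem_filter.mp hx).2]
      rw [Finset.sum_congr rfl h2, Finset.sum_const, smul_eq_mul, sq]
    have hMsum : ∑ c : Fin b, (C.filter (fun x => x i = c)).card = M := by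
      have h2 := Finset.sum_fiberwise_of_maps_to (s := C) (t := (Finset.univ : Finset (Fin b)))
        (g := fun x => x i) (fun x _ => Finset.mem_univ _) (fun _ => (1:ℕ))
      simp only [Finset.sum_const, smul_eq_mul, mul_one] at h2
      rw [h2, ← hM]
    have hCS : M * M ≤ b * E := by
      have hcs := sq_sum_le_card_mul_sum_sq (s := (Finset.univ : Finset (Fin b)))
        (f := fun c => ((C.filter (fun x => x i = c)).card : ℕ))
      rw [hMsum] at hcs
      simpa [sq, Finset.card_univ, hfib] using hcs
    have h1 : b * D + b * E = b * (M*M) := by rw [← hDE]; ring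
    have h2 : b * (M*M) = (b-1)*(M*M) + M*M := by
      have hb1 : b - 1 + 1 = b := Nat.sub_add_cancel (by linarith)
      nth_rewrite 1 [← hb1]
      ring
    linarith
  have hsum : b * T ≤ r * ((b-1) * (M*M)) := by
    rw [hswap, Finset.mul_sum]
    calc ∑ i : Fin r, b * (∑ x ∈ C, ∑ y ∈ C, (if x i ≠ y i then 1 else 0))
        ≤ ∑ _i : Fin r, (b-1) * (M*M) := Finset.sum_le_sum (fun i _ => hcoord i)
      _ = r * ((b-1) * (M*M)) := by rw [Finset.sum_const, smul_eq_mul, Finset.card_univ,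
            Fintype.card_fin]
  have hchain : (b * ((M-1) * s)) * M ≤ (r * ((b-1) * M)) * M := by
    calc (b * ((M-1) * s)) * M = b * (M * ((M-1)*s)) := by ring
      _ ≤ b * T := Nat.mul_le_mul_left _ hlow
      _ ≤ r * ((b-1) * (M*M)) := hsum
      _ = (r * ((b-1) * M)) * M := by ring
  have h := Nat.le_of_mul_le_mul_right hchain hM1
  by_contra hc
  push_neg at hc
  have h1 : 1 ≤ a*b := by nlinarith
  have h2 : a ≤ a*b := Nat.le_mul_of_pos_right a (by linarith)
  zify [h1, h2, (by linarith : 1 ≤ b), (by linarith : 1 ≤ M)] at hs h hc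
  have key : ((b:ℤ) * ((M - 1) * s)) * (a*b - 1) ≤ (r * ((b-1) * M)) * (a*b-1) :=
    mul_le_mul_of_nonneg_right h (by nlinarith)
  have e1 : ((b:ℤ) * ((M-1)*s))*(a*b-1) = (b*(M-1)) * (s*(a*b-1)) := by ring
  rw [e1, hs] at key
  nlinarith [key, mul_pos (mul_pos (by exact_mod_cast hr : (0:ℤ) < r)
    (by have : (2:ℤ) ≤ (b:ℤ) := by exact_mod_cast hb
        linarith : (0:ℤ) < (b:ℤ) - 1))
    (by linarith : (0:ℤ) < (M:ℤ) - (a:ℤ)*b)]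


lemma geometry_code (K : Type) [Field K] [Fintype K] (q k d r s : ℕ)
    (hqK : Fintype.card K = q) (hk : 1 ≤ k) (hkd : k < d)
    (hr : r * ∏ i ∈ Finset.range k, (q ^ (k - i) - 1) =
      ∏ i ∈ Finset.range k, (q ^ (d - i) - 1))
    (hs2 : (r - s) * (q ^ d - 1) = r * (q ^ k - 1))
    (hsr : s ≤ r) :
    ∃ Φ : Fin (q ^ d) → (Fin r → Fin (q ^ (d-k))),
      ∀ u v, u ≠ v → hammingDist (Φ u) (Φ v) = s := by
  classical
  subst hqK
  set q := Fintype.card K with hq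
  have hq2 : 2 ≤ q := Fintype.one_lt_card
  set V := (Fin d → K) with hV
  have hfinrank : finrank K V = d := finrank_fin_fun K
  have hcardV : Fintype.card V = q ^ d := by
    rw [card_eq_pow_finrank (K := K) (V := V), hfinrank]
  haveI : FiniteDimensional K V := by infer_instance
  -- the type of k-dimensional subspaces
  haveI : Finite (Submodule K V) := Finite.of_injective _ SetLike.coe_injective
  set Sub := {W : Submodule K V // finrank K ↥W = k} with hSub
  haveI : Finite Sub := Subtype.finite
  letI : Fintype Sub := Fintype.ofFinite Sub
  -- cardinality of a k-dimensional subspace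
  have hcardW : ∀ W : Sub, Fintype.card ↥W.1 = q ^ k := by
    intro W
    rw [card_eq_pow_finrank (K := K) (V := ↥W.1), W.2]
  -- count of linearly independent tuples in a space
  have hcount : ∀ (M : Type) [AddCommGroup M] [Module K M] [Finite M],
      ∀ j : ℕ, j ≤ finrank K M →
      Nat.card {f : Fin j → M // LinearIndependent K f} =
        ∏ i ∈ Finset.range j, (q ^ (finrank K M) - q ^ i) := by
    intro M _ _ _ j hj
    rw [card_linearIndependent hj, ← hq]
    exact Fin.prod_univ_eq_prod_range (fun i => q ^ finrank K M - q ^ i) j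
  -- fibers of the span map
  have hfiber : ∀ W : Sub,
      Nat.card {f : {f : Fin k → V // LinearIndependent K f} //
        Submodule.span K (Set.range f.1) = W.1}
        = ∏ i ∈ Finset.range k, (q ^ k - q ^ i) := by
    intro W
    have e : {f : {f : Fin k → V // LinearIndependent K f} //
        Submodule.span K (Set.range f.1) = W.1}
        ≃ {g : Fin k → ↥W.1 // LinearIndependent K g} := by
      refine ⟨fun f => ⟨fun i => ⟨f.1.1 i, ?_⟩, ?_⟩,
        fun g => ⟨⟨fun i => ((g.1 i : V)), ?_⟩, ?_⟩, ?_, ?_⟩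
      · have hmem : f.1.1 i ∈ Submodule.span K (Set.range f.1.1) :=
          Submodule.subset_span (Set.mem_range_self i)
        rw [f.2] at hmem
        exact hmem
      · exact LinearIndependent.of_comp (W.1.subtype) f.1.2
      · exact g.2.map' W.1.subtype (Submodule.ker_subtype W.1)
      · have hind : LinearIndependent K (fun i => ((g.1 i : V))) :=
          g.2.map' W.1.subtype (Submodule.ker_subtype W.1)
        apply Submodule.eq_of_le_of_finrank_le
        · rw [Submodule.span_le]
          rintro x ⟨i, rfl⟩
          exact (g.1 i).2
        · rw [W.2, finrank_span_eq_card hind, Fintype.card_fin]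
      · intro f
        apply Subtype.ext
        apply Subtype.ext
        rfl
      · intro g
        apply Subtype.ext
        funext i
        apply Subtype.ext
        rfl
    rw [Nat.card_congr e, hcount ↥W.1 k (le_of_eq W.2.symm), W.2]
  -- the span map
  set π : {f : Fin k → V // LinearIndependent K f} → Sub :=
    fun f => ⟨Submodule.span K (Set.range f.1), by
      rw [finrank_span_eq_card f.2, Fintype.card_fin]⟩ with hπ
  have hsigma : Nat.card {f : Fin k → V // LinearIndependent K f}
      = ∑ W : Sub, Nat.card {f : {f : Fin k → V // LinearIndependent K f} // π f = W} := by
    letI : Fintype {f : Fin k → V // LinearIndependent K f} := Fintype.ofFinite _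
    letI : ∀ W : Sub, Fintype {f : {f : Fin k → V // LinearIndependent K f} // π f = W} :=
      fun W => Fintype.ofFinite _
    rw [Nat.card_eq_fintype_card, Fintype.card_congr (Equiv.sigmaFiberEquiv π).symm,
      Fintype.card_sigma]
    exact Finset.sum_congr rfl (fun W _ => (Nat.card_eq_fintype_card).symm)
  have hfibeq : ∀ W : Sub, Nat.card {f : {f : Fin k → V // LinearIndependent K f} // π f = W}
      = ∏ i ∈ Finset.range k, (q ^ k - q ^ i) := by
    intro W
    rw [← hfiber W]
    apply Nat.card_congr
    apply Equiv.subtypeEquivRight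
    intro f
    constructor
    · intro h; exact congrArg Subtype.val h
    · intro h; exact Subtype.ext h
  have hmain : (Fintype.card Sub) * ∏ i ∈ Finset.range k, (q ^ k - q ^ i)
      = ∏ i ∈ Finset.range k, (q ^ d - q ^ i) := by
    have h1 := hcount V k (by rw [hfinrank]; omega)
    rw [hfinrank] at h1
    rw [← h1, hsigma, Finset.sum_congr rfl (fun W _ => hfibeq W), Finset.sum_const,
      smul_eq_mul, Finset.card_univ]
  -- convert products
  have hfac : ∀ (m : ℕ), k ≤ m → ∏ i ∈ Finset.range k, (q ^ m - q ^ i)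
      = (∏ i ∈ Finset.range k, q ^ i) * ∏ i ∈ Finset.range k, (q ^ (m - i) - 1) := by
    intro m hm
    rw [← Finset.prod_mul_distrib]
    apply Finset.prod_congr rfl
    intro i hi
    rw [Finset.mem_range] at hi
    rw [Nat.mul_sub, mul_one, ← pow_add]
    congr 2
    omega
  have hAk1 : 1 ≤ ∏ i ∈ Finset.range k, (q ^ (k - i) - 1) := by
    apply Nat.one_le_iff_ne_zero.mpr
    apply Finset.prod_ne_zero_iff.mpr
    intro i hi
    rw [Finset.mem_range] at hi
    have : 2 ≤ q ^ (k - i) := le_trans hq2 (Nat.le_self_pow (by omega) q)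
    omega
  have hP1 : 1 ≤ ∏ i ∈ Finset.range k, q ^ i := by
    apply Nat.one_le_iff_ne_zero.mpr
    apply Finset.prod_ne_zero_iff.mpr
    intro i hi
    positivity
  have hcardSub : Fintype.card Sub = r := by
    have h2 : (Fintype.card Sub) * ((∏ i ∈ Finset.range k, q ^ i)
        * ∏ i ∈ Finset.range k, (q ^ (k - i) - 1))
        = r * ((∏ i ∈ Finset.range k, q ^ i) * ∏ i ∈ Finset.range k, (q ^ (k - i) - 1)) := by
      calc (Fintype.card Sub) * ((∏ i ∈ Finset.range k, q ^ i)
            * ∏ i ∈ Finset.range k, (q ^ (k - i) - 1))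
          = (Fintype.card Sub) * ∏ i ∈ Finset.range k, (q ^ k - q ^ i) := by
            rw [hfac k (le_refl k)]
        _ = ∏ i ∈ Finset.range k, (q ^ d - q ^ i) := hmain
        _ = (∏ i ∈ Finset.range k, q ^ i) * ∏ i ∈ Finset.range k, (q ^ (d - i) - 1) :=
            hfac d (le_of_lt hkd)
        _ = (∏ i ∈ Finset.range k, q ^ i) * (r * ∏ i ∈ Finset.range k, (q ^ (k - i) - 1)) := by
            rw [hr]
        _ = r * ((∏ i ∈ Finset.range k, q ^ i) * ∏ i ∈ Finset.range k, (q ^ (k - i) - 1)) := by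
            ring
    exact Nat.eq_of_mul_eq_mul_right (by positivity) h2
  -- transitivity: the number of k-subspaces containing a nonzero vector is constant
  have htrans : ∀ x y : V, x ≠ 0 → y ≠ 0 →
      Nat.card {W : Sub // x ∈ W.1} = Nat.card {W : Sub // y ∈ W.1} := by
    intro x y hx hy
    obtain ⟨φ, hφ⟩ : ∃ φ : V ≃ₗ[K] V, φ x = y := by
      have hxli : LinearIndepOn K id ({x} : Set V) := LinearIndepOn.singleton hx
      have hyli : LinearIndepOn K id ({y} : Set V) := LinearIndepOn.singleton hy
      let Bx := Basis.extend hxli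
      let By := Basis.extend hyli
      have hxmem : x ∈ hxli.extend (Set.subset_univ ({x} : Set V)) :=
        hxli.subset_extend _ (Set.mem_singleton x)
      have hymem : y ∈ hyli.extend (Set.subset_univ ({y} : Set V)) :=
        hyli.subset_extend _ (Set.mem_singleton y)
      let e0 := Bx.indexEquiv By
      let e := e0.trans (Equiv.swap (e0 ⟨x, hxmem⟩) ⟨y, hymem⟩)
      refine ⟨Bx.equiv By e, ?_⟩
      have h1 : Bx ⟨x, hxmem⟩ = x := Basis.extend_apply_self hxli ⟨x, hxmem⟩
      have h2 : By ⟨y, hymem⟩ = y := Basis.extend_apply_self hyli ⟨y, hymem⟩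
      calc (Bx.equiv By e) x = (Bx.equiv By e) (Bx ⟨x, hxmem⟩) := by rw [h1]
        _ = By (e ⟨x, hxmem⟩) := Basis.equiv_apply Bx ⟨x, hxmem⟩ By e
        _ = y := by
            have : e ⟨x, hxmem⟩ = ⟨y, hymem⟩ := by
              show (Equiv.swap (e0 ⟨x, hxmem⟩) ⟨y, hymem⟩) (e0 ⟨x, hxmem⟩) = ⟨y, hymem⟩
              exact Equiv.swap_apply_left _ _
            rw [this, h2]
    have hrankmap : ∀ (ψ : V ≃ₗ[K] V) (W : Submodule K V),
        finrank K ↥(W.map (ψ : V →ₗ[K] V)) = finrank K ↥W :=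
      fun ψ W => LinearEquiv.finrank_map_eq ψ W
    apply Nat.card_congr
    refine ⟨fun W => ⟨⟨W.1.1.map (φ : V →ₗ[K] V), by rw [hrankmap]; exact W.1.2⟩, ?_⟩,
      fun W => ⟨⟨W.1.1.map (φ.symm : V →ₗ[K] V), by rw [hrankmap]; exact W.1.2⟩, ?_⟩, ?_, ?_⟩
    · rw [Submodule.mem_map_equiv]
      show φ.symm y ∈ W.1.1
      rw [← hφ, LinearEquiv.symm_apply_apply]
      exact W.2
    · rw [Submodule.mem_map_equiv]
      show φ.symm.symm x ∈ W.1.1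
      rw [LinearEquiv.symm_symm, hφ]
      exact W.2
    · intro W
      apply Subtype.ext
      apply Subtype.ext
      show (W.1.1.map (φ : V →ₗ[K] V)).map (φ.symm : V →ₗ[K] V) = W.1.1
      ext z
      simp [Submodule.mem_map_equiv, LinearEquiv.symm_symm, LinearEquiv.symm_apply_apply,
        LinearEquiv.apply_symm_apply]
    · intro W
      apply Subtype.ext
      apply Subtype.ext
      show (W.1.1.map (φ.symm : V →ₗ[K] V)).map (φ : V →ₗ[K] V) = W.1.1
      ext z
      simp [Submodule.mem_map_equiv, LinearEquiv.symm_symm, LinearEquiv.symm_apply_apply,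
        LinearEquiv.apply_symm_apply]
  -- pair counting
  have hd0 : 0 < d := by omega
  set xo : V := (fun _ => 1) with hxo
  have hxone : xo ≠ 0 := by
    intro h
    have := congrFun h ⟨0, hd0⟩
    exact one_ne_zero this
  set t := Nat.card {W : Sub // xo ∈ W.1} with htdef
  have hXY : (Σ W : Sub, {x : ↥W.1 // x ≠ 0}) ≃
      (Σ x : {x : V // x ≠ 0}, {W : Sub // x.1 ∈ W.1}) := by
    refine ⟨fun P => ⟨⟨(P.2.1 : V), fun h => P.2.2 (by
        apply Subtype.ext
        exact h)⟩, ⟨P.1, (P.2.1).2⟩⟩,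
      fun P => ⟨P.2.1, ⟨⟨P.1.1, P.2.2⟩, fun h => P.1.2 (by
        have := congrArg Subtype.val h
        exact this)⟩⟩, ?_, ?_⟩
    · intro P; rfl
    · intro P; rfl
  have hcardX : Nat.card (Σ W : Sub, {x : ↥W.1 // x ≠ 0}) = r * (q ^ k - 1) := by
    letI : ∀ W : Sub, Fintype {x : ↥W.1 // x ≠ 0} := fun W => Fintype.ofFinite _
    rw [Nat.card_eq_fintype_card, Fintype.card_sigma]
    have hW : ∀ W : Sub, Fintype.card {x : ↥W.1 // x ≠ 0} = q ^ k - 1 := by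
      intro W
      have h1 : Fintype.card {x : ↥W.1 // x = 0} = 1 := Fintype.card_subtype_eq (0 : ↥W.1)
      have h2 := Fintype.card_subtype_compl (p := fun x : ↥W.1 => x = 0)
      rw [h1, hcardW W] at h2
      rw [← h2]
    rw [Finset.sum_congr rfl (fun W _ => hW W), Finset.sum_const, smul_eq_mul,
      Finset.card_univ, hcardSub]
  have hcardY : Nat.card (Σ x : {x : V // x ≠ 0}, {W : Sub // x.1 ∈ W.1})
      = (q ^ d - 1) * t := by
    letI : ∀ x : {x : V // x ≠ 0}, Fintype {W : Sub // x.1 ∈ W.1} := fun x => Fintype.ofFinite _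
    rw [Nat.card_eq_fintype_card, Fintype.card_sigma]
    have hx : ∀ x : {x : V // x ≠ 0}, Fintype.card {W : Sub // x.1 ∈ W.1} = t := by
      intro x
      rw [← Nat.card_eq_fintype_card]
      exact htrans x.1 xo x.2 hxone
    rw [Finset.sum_congr rfl (fun x _ => hx x), Finset.sum_const, smul_eq_mul, Finset.card_univ]
    congr 1
    have h1 : Fintype.card {x : V // x = 0} = 1 := Fintype.card_subtype_eq (0 : V)
    have h2 := Fintype.card_subtype_compl (p := fun x : V => x = 0)
    rw [h1, hcardV] at h2
    rw [← h2]
  have htval : t * (q ^ d - 1) = r * (q ^ k - 1) := by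
    rw [mul_comm, ← hcardY, ← Nat.card_congr hXY, hcardX]
  have hqd1 : 0 < q ^ d - 1 := by
    have : 2 ≤ q ^ d := le_trans hq2 (Nat.le_self_pow (by omega) q)
    omega
  have hts : t = r - s := by
    apply Nat.eq_of_mul_eq_mul_right hqd1
    rw [htval, hs2]
  -- quotient cardinalities
  have hquot : ∀ W : Sub, Nat.card (V ⧸ W.1) = q ^ (d - k) := by
    intro W
    haveI : Finite (V ⧸ W.1) := Finite.of_surjective _ (Submodule.Quotient.mk_surjective W.1)
    letI : Fintype (V ⧸ W.1) := Fintype.ofFinite _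
    rw [Nat.card_eq_fintype_card, card_eq_pow_finrank (K := K), ← hq]
    congr 1
    have h1 := Submodule.finrank_quotient_add_finrank W.1
    rw [hfinrank, W.2] at h1
    omega
  -- build the code
  let eS : Sub ≃ Fin r := Fintype.equivFinOfCardEq hcardSub
  letI : ∀ W : Sub, Fintype (V ⧸ W.1) := fun W => Fintype.ofFinite _
  let eQ : ∀ W : Sub, (V ⧸ W.1) ≃ Fin (q ^ (d-k)) := fun W =>
    Fintype.equivFinOfCardEq (by rw [← Nat.card_eq_fintype_card, hquot])
  let eV : Fin (q ^ d) ≃ V := (Fintype.equivFinOfCardEq hcardV).symm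
  refine ⟨fun u i => eQ (eS.symm i) (Submodule.Quotient.mk (eV u)), ?_⟩
  intro u v huv
  have hxd : eV u - eV v ≠ 0 := sub_ne_zero_of_ne (fun h => huv (eV.injective h))
  have hiff : ∀ i : Fin r, (eQ (eS.symm i) (Submodule.Quotient.mk (eV u))
      = eQ (eS.symm i) (Submodule.Quotient.mk (eV v)))
      ↔ (eV u - eV v) ∈ (eS.symm i).1 := by
    intro i
    rw [Equiv.apply_eq_iff_eq, Submodule.Quotient.eq]
  have hfiltcard : #(Finset.univ.filter fun i : Fin r => (eV u - eV v) ∈ (eS.symm i).1)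
      = r - s := by
    have e2 : {i : Fin r // eV u - eV v ∈ (eS.symm i).1} ≃ {W : Sub // eV u - eV v ∈ W.1} :=
      Equiv.subtypeEquiv eS.symm (fun i => Iff.rfl)
    calc #(Finset.univ.filter fun i : Fin r => (eV u - eV v) ∈ (eS.symm i).1)
        = Fintype.card {i : Fin r // eV u - eV v ∈ (eS.symm i).1} :=
          (Fintype.card_subtype _).symm
      _ = Nat.card {i : Fin r // eV u - eV v ∈ (eS.symm i).1} := Nat.card_eq_fintype_card.symm
      _ = Nat.card {W : Sub // eV u - eV v ∈ W.1} := Nat.card_congr e2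
      _ = t := htrans _ xo hxd hxone
      _ = r - s := hts
  simp only [hammingDist]
  rw [show (Finset.univ.filter fun i : Fin r =>
      (eQ (eS.symm i)) (Submodule.Quotient.mk (eV u))
        ≠ (eQ (eS.symm i)) (Submodule.Quotient.mk (eV v)))
      = Finset.univ \ (Finset.univ.filter fun i : Fin r =>
        (eV u - eV v) ∈ (eS.symm i).1) from by
    ext i
    simp only [Finset.mem_filter, Finset.mem_sdiff, Finset.mem_univ, true_and, ne_eq]
    rw [hiff i]]
  rw [Finset.card_sdiff_of_subset (Finset.filter_subset _ _), Finset.card_univ, Fintype.card_fin,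
    hfiltcard]
  exact Nat.sub_sub_self hsr


lemma mono_to_chrom (N n r : ℕ) (χ : Finset (Fin N) → Finset (Fin r))
    (h : HasMonoClique N 2 n r χ) :
    ∃ i : Fin r, (n : ℕ∞) ≤ (colorGraph N r χ i).chromaticNumber := by
  obtain ⟨S, hcard, c, hc⟩ := h
  refine ⟨c, ?_⟩
  have hclique : (colorGraph N r χ c).IsClique ↑S := by
    intro x hx y hy hxy
    refine ⟨hxy, hc {x, y} ?_ (Finset.card_pair hxy)⟩
    exact Finset.insert_subset (Finset.mem_coe.mp hx) (Finset.singleton_subset_iff.mpr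
      (Finset.mem_coe.mp hy))
  have := hclique.card_le_chromaticNumber
  rw [hcard] at this
  exact this

lemma code_coloring (N m r s : ℕ) (hsr : s ≤ r) (g : Fin N → (Fin r → Fin m))
    (hg : ∀ u v : Fin N, u ≠ v → hammingDist (g u) (g v) = s) :
    ∃ χ : Finset (Fin N) → Finset (Fin r), IsSetColoring N 2 r s χ ∧
      ¬ HasMonoClique N 2 (m+1) r χ ∧
      ∀ i : Fin r, ¬ (((m+1 : ℕ) : ℕ∞) ≤ (colorGraph N r χ i).chromaticNumber) := by
  classical
  obtain ⟨T0, -, hT0⟩ := Finset.exists_subset_card_eq (s := (Finset.univ : Finset (Fin r)))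
    (by simpa using hsr)
  set χ : Finset (Fin N) → Finset (Fin r) := fun e =>
    if h : e.card = 2 then
      (Finset.univ.filter fun i =>
        g (e.min' (Finset.card_pos.mp (by rw [h]; norm_num))) i ≠
        g (e.max' (Finset.card_pos.mp (by rw [h]; norm_num))) i)
    else T0 with hχdef
  have hdist : ∀ u v : Fin N,
      (Finset.univ.filter fun i => g u i ≠ g v i).card = hammingDist (g u) (g v) := by
    intro u v
    rfl
  have hkey : ∀ u v : Fin N, u ≠ v → ∀ i ∈ χ {u, v}, g u i ≠ g v i := by
    intro u v huv i hi
    have hc2 : ({u, v} : Finset (Fin N)).card = 2 := Finset.card_pair huv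
    rw [hχdef] at hi
    simp only [dif_pos hc2, Finset.mem_filter] at hi
    obtain ⟨a, b, hane, hamem, hbmem, hi2⟩ : ∃ a b : Fin N, a ≠ b ∧
        a ∈ ({u, v} : Finset (Fin N)) ∧ b ∈ ({u, v} : Finset (Fin N)) ∧ g a i ≠ g b i :=
      ⟨_, _, ne_of_lt (Finset.min'_lt_max'_of_card _ (by rw [hc2]; norm_num)),
        Finset.min'_mem _ _, Finset.max'_mem _ _, hi.2⟩
    simp only [Finset.mem_insert, Finset.mem_singleton] at hamem hbmem
    rcases hamem with rfl | rfl <;> rcases hbmem with rfl | rfl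
    · exact absurd rfl hane
    · exact hi2
    · exact fun h => hi2 h.symm
    · exact absurd rfl hane
  refine ⟨χ, ?_, ?_, ?_⟩
  · intro e he
    rw [hχdef]
    simp only [dif_pos he]
    have hane : e.min' (Finset.card_pos.mp (by rw [he]; norm_num))
        ≠ e.max' (Finset.card_pos.mp (by rw [he]; norm_num)) :=
      ne_of_lt (Finset.min'_lt_max'_of_card _ (by rw [he]; norm_num))
    rw [hdist, hg _ _ hane]
  · rintro ⟨S, hcard, c, hc⟩
    have hinj : Set.InjOn (fun v => g v c) ↑S := by
      intro u hu v hv huvc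
      by_contra huv
      exact hkey u v huv c (hc {u, v} (Finset.insert_subset (Finset.mem_coe.mp hu)
        (Finset.singleton_subset_iff.mpr (Finset.mem_coe.mp hv))) (Finset.card_pair huv)) huvc
    have hle : S.card ≤ Fintype.card (Fin m) := by
      rw [← Finset.card_univ]
      exact Finset.card_le_card_of_injOn (fun v => g v c) (fun a _ => Finset.mem_univ _) hinj
    rw [hcard, Fintype.card_fin] at hle
    omega
  · intro i hchrom
    have hcol : (colorGraph N r χ i).Colorable m := by
      refine ⟨SimpleGraph.Coloring.mk (fun v => g v i) ?_⟩
      intro u v hadj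
      exact hkey u v hadj.1 i hadj.2
    have hle := le_trans hchrom hcol.chromaticNumber_le
    rw [Nat.cast_le] at hle
    omega


lemma ramsey_mem_s13 (a b r s N : ℕ) (ha : 2 ≤ a) (hb : 2 ≤ b) (hr : 1 ≤ r)
    (hs : s * (a*b - 1) = r * (a*b - a)) (hN : N = a*b + 1)
    (χ : Finset (Fin N) → Finset (Fin r)) (hχ : IsSetColoring N 2 r s χ) :
    HasMonoClique N 2 (b+1) r χ := by
  subst hN
  by_contra hno
  have hfree : ∀ i : Fin r, (colorGraph (a*b+1) r χ i).CliqueFree (b+1) := by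
    intro i S hS
    apply hno
    refine ⟨S, hS.2, i, ?_⟩
    intro e he hcard
    obtain ⟨x, y, hxy, rfl⟩ := Finset.card_eq_two.mp hcard
    have hx : x ∈ S := he (by simp)
    have hy : y ∈ S := he (by simp)
    exact (hS.1 (Finset.mem_coe.mpr hx) (Finset.mem_coe.mpr hy) hxy).2
  have hT := fun i : Fin r =>
    turan_deg_sum b (Fin (a*b+1)) (colorGraph (a*b+1) r χ i) (hfree i)
  have hsum := color_deg_sum (a*b+1) r s χ hχ
  have hineq : b * ((a*b+1) * ((a*b) * s)) ≤ r * ((b - 1) * (a*b+1)^2) := by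
    have e0 : (a*b+1) * ((a*b) * s) = (a*b+1) * ((a*b+1-1) * s) := by
      have h00 : a*b+1-1 = a*b := by omega
      rw [h00]
    calc b * ((a*b+1) * ((a*b) * s))
        = b * ∑ i : Fin r, ∑ v, (colorGraph (a*b+1) r χ i).degree v := by
          rw [hsum, ← e0]
      _ = ∑ i : Fin r, b * (∑ v, (colorGraph (a*b+1) r χ i).degree v) := by
          rw [Finset.mul_sum]
      _ ≤ ∑ _i : Fin r, (b-1) * (Fintype.card (Fin (a*b+1)))^2 :=
          Finset.sum_le_sum (fun i _ => hT i)
      _ = r * ((b-1) * (a*b+1)^2) := by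
          rw [Finset.sum_const, Finset.card_univ, Fintype.card_fin, smul_eq_mul,
            Fintype.card_fin]
  -- arithmetic contradiction
  have h1 : 1 ≤ a*b := by nlinarith
  have h2 : a ≤ a*b := Nat.le_mul_of_pos_right a (by omega)
  zify [h1, h2, (by omega : 1 ≤ b)] at hs hineq
  have hab : (1:ℤ) ≤ (a:ℤ)*b := by exact_mod_cast h1
  nlinarith [hineq, hs, mul_le_mul_of_nonneg_right hineq
    (by linarith : (0:ℤ) ≤ (a:ℤ)*(b:ℤ) - 1)]


end Aux

/-- Proposition 2: exact values from finite geometry. Here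
`r = ∏_{i=0}^{k-1} (q^{d-i}-1)/(q^{k-i}-1)` is the Gaussian binomial coefficient and
`s = (1 - (q^k-1)/(q^d-1)) r`, expressed multiplicatively to stay in `ℕ`. -/
theorem set_ramsey_finite_geometry (k d q : ℕ) (hk : 1 ≤ k) (hkd : k < d)
    (hq : IsPrimePow q) (n r s : ℕ) (hn : n = q ^ (d - k) + 1)
    (hr : r * ∏ i ∈ Finset.range k, (q ^ (k - i) - 1) =
      ∏ i ∈ Finset.range k, (q ^ (d - i) - 1))
    (hs : s * (q ^ d - 1) = r * (q ^ d - q ^ k)) :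
    setRamsey 2 n r s = q ^ d + 1 ∧ setRamsey' n r s = q ^ d + 1 ∧
      maxCode (n - 1) r s + 1 = q ^ d + 1 := by
  classical
  obtain ⟨p, e, hp, he, hpe⟩ := hq
  have hp' : p.Prime := Nat.prime_iff.mpr hp
  have hq2 : 2 ≤ q := by
    rw [← hpe]
    calc 2 ≤ p := hp'.two_le
      _ ≤ p ^ e := Nat.le_self_pow (by omega) p
  set a := q ^ k with ha0
  set b := q ^ (d - k) with hb0
  have hab : a * b = q ^ d := by
    rw [ha0, hb0, ← pow_add]
    congr 1
    omega
  have ha : 2 ≤ a := le_trans hq2 (Nat.le_self_pow (by omega) q)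
  have hb : 2 ≤ b := le_trans hq2 (Nat.le_self_pow (by omega) q)
  have hqd2 : 2 ≤ q ^ d := le_trans hq2 (Nat.le_self_pow (by omega) q)
  have hapow : a < q ^ d := pow_lt_pow_right₀ (by omega) hkd
  have hrhs1 : 1 ≤ ∏ i ∈ Finset.range k, (q ^ (d - i) - 1) := by
    apply Nat.one_le_iff_ne_zero.mpr
    apply Finset.prod_ne_zero_iff.mpr
    intro i hi
    rw [Finset.mem_range] at hi
    have : 2 ≤ q ^ (d - i) := le_trans hq2 (Nat.le_self_pow (by omega) q)
    omega
  have hr1 : 1 ≤ r := by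
    rcases Nat.eq_zero_or_pos r with rfl | h
    · rw [zero_mul] at hr
      omega
    · exact h
  have hs1 : 1 ≤ s := by
    have hpos : 0 < s * (q ^ d - 1) := by
      rw [hs]
      exact Nat.mul_pos (by omega) (by omega)
    rcases Nat.eq_zero_or_pos s with rfl | h
    · simp at hpos
    · exact h
  have hsr : s ≤ r := by
    have h1 : s * (q ^ d - 1) ≤ r * (q ^ d - 1) := by
      rw [hs]
      exact Nat.mul_le_mul_left r (by omega)
    exact Nat.le_of_mul_le_mul_right h1 (by omega)
  have hs2 : (r - s) * (q ^ d - 1) = r * (a - 1) := by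
    have hsplit : r * (q ^ d - 1) = r * (q ^ d - a) + r * (a - 1) := by
      rw [← Nat.mul_add]
      congr 1
      omega
    calc (r - s) * (q ^ d - 1) = r * (q ^ d - 1) - s * (q ^ d - 1) := Nat.sub_mul r s _
      _ = r * (q ^ d - 1) - r * (q ^ d - a) := by rw [hs]
      _ = r * (a - 1) := by rw [hsplit, Nat.add_sub_cancel_left]
  have hs' : s * (a * b - 1) = r * (a * b - a) := by rw [hab]; exact hs
  -- the geometric code
  have hcode : ∃ Φ : Fin (q ^ d) → (Fin r → Fin b), ∀ u v, u ≠ v →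
      hammingDist (Φ u) (Φ v) = s := by
    haveI := Fact.mk hp'
    letI : Fintype (GaloisField p e) := Fintype.ofFinite _
    have hcardK : Fintype.card (GaloisField p e) = q := by
      rw [← Nat.card_eq_fintype_card, GaloisField.card p e (by omega : e ≠ 0)]
      exact hpe
    exact geometry_code (GaloisField p e) q k d r s hcardK hk hkd hr hs2 hsr
  obtain ⟨Φ, hΦ⟩ := hcode
  -- lower-bound colorings
  have hlow : ∀ N : ℕ, N ≤ q ^ d → ∃ χ : Finset (Fin N) → Finset (Fin r),
      IsSetColoring N 2 r s χ ∧ ¬ HasMonoClique N 2 n r χ ∧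
      ∀ i : Fin r, ¬ ((n : ℕ∞) ≤ (colorGraph N r χ i).chromaticNumber) := by
    intro N hN
    obtain ⟨χ, h1, h2, h3⟩ := code_coloring N b r s hsr (fun u => Φ (Fin.castLE hN u))
      (fun u v huv => hΦ _ _ (fun hc => huv (Fin.castLE_injective hN hc)))
    rw [← hn] at h2 h3
    exact ⟨χ, h1, h2, h3⟩
  have hmem : ∀ χ : Finset (Fin (q ^ d + 1)) → Finset (Fin r),
      IsSetColoring (q ^ d + 1) 2 r s χ → HasMonoClique (q ^ d + 1) 2 n r χ := by
    intro χ hχ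
    have hh := ramsey_mem_s13 a b r s (q ^ d + 1) ha hb hr1 hs' (by rw [hab]) χ hχ
    rwa [← hn] at hh
  have hRam : setRamsey 2 n r s = q ^ d + 1 := by
    apply IsLeast.csInf_eq
    constructor
    · exact fun χ hχ => hmem χ hχ
    · intro N hN
      by_contra hlt
      push_neg at hlt
      obtain ⟨χ, h1, h2, _⟩ := hlow N (by omega)
      exact h2 (hN χ h1)
  have hRam' : setRamsey' n r s = q ^ d + 1 := by
    apply IsLeast.csInf_eq
    constructor
    · intro χ hχ
      exact mono_to_chrom _ _ _ χ (hmem χ hχ)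
    · intro N hN
      by_contra hlt
      push_neg at hlt
      obtain ⟨χ, h1, _, h3⟩ := hlow N (by omega)
      obtain ⟨i, hi⟩ := hN χ h1
      exact h3 i hi
  have hMax : maxCode (n - 1) r s = q ^ d := by
    have hn1 : n - 1 = b := by omega
    rw [hn1]
    show sSup {M | ∃ C : Finset (Fin r → Fin b),
      (∀ x ∈ C, ∀ y ∈ C, x ≠ y → s ≤ hammingDist x y) ∧ C.card = M} = q ^ d
    have hset : {M | ∃ C : Finset (Fin r → Fin b),
        (∀ x ∈ C, ∀ y ∈ C, x ≠ y → s ≤ hammingDist x y) ∧ C.card = M} = Set.Iic (q ^ d) := by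
      ext M
      simp only [Set.mem_setOf_eq, Set.mem_Iic]
      constructor
      · rintro ⟨C, hC, rfl⟩
        have hpl := plotkin a b r s ha hb hr1 hs' C hC
        rwa [hab] at hpl
      · intro hM
        have hΦinj : Function.Injective Φ := by
          intro u v huv
          by_contra hne
          have h0 := hΦ u v hne
          rw [huv, hammingDist_self] at h0
          omega
        have hC0card : (Finset.univ.image Φ).card = q ^ d := by
          rw [Finset.card_image_of_injective _ hΦinj, Finset.card_univ, Fintype.card_fin]
        obtain ⟨C, hCsub, hCcard⟩ := Finset.exists_subset_card_eq (s := Finset.univ.image Φ) (n := M)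
          (by rw [hC0card]; exact hM)
        refine ⟨C, ?_, hCcard⟩
        intro x hx y hy hxy
        obtain ⟨u, -, rfl⟩ := Finset.mem_image.mp (hCsub hx)
        obtain ⟨v, -, rfl⟩ := Finset.mem_image.mp (hCsub hy)
        exact le_of_eq (hΦ u v (fun h => hxy (by rw [h]))).symm
    rw [hset, csSup_Iic]
  exact ⟨hRam, hRam', by rw [hMax]⟩
end

section
/- For any integers n > k ≥ 3 and r > s ≥ 1, R_k(n; r, s) ≤ C(r,s)^{C(R_{k-1}(n-1; r, s), k-1)}, where C(·,·) denotes the binomial coefficient. -/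
set_option maxHeartbeats 1000000

namespace ErdosRadoAux

open Finset

lemma hockey (c m : ℕ) : ∑ j ∈ Finset.range m, j.choose c = m.choose (c + 1) := by
  induction m with
  | zero => simp
  | succ m ih => rw [Finset.sum_range_succ, ih, Nat.choose_succ_succ, Nat.add_comm]

def defic (q k : ℕ) : ℕ → ℕ
  | 0 => 0
  | t + 1 => (defic q k t + 1) / q ^ (t.choose (k - 2))

lemma defic_le (q k : ℕ) (hq : 2 ≤ q) (t : ℕ) : defic q k t ≤ min t (k - 2) := by
  induction t with
  | zero => simp [defic]
  | succ t ih =>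
    show (defic q k t + 1) / q ^ (t.choose (k - 2)) ≤ _
    by_cases h : t < k - 2
    · rw [Nat.choose_eq_zero_of_lt h, pow_zero, Nat.div_one]
      omega
    · have h1 : 0 < t.choose (k - 2) := Nat.choose_pos (by omega)
      have h2 : 2 ≤ q ^ t.choose (k - 2) := by
        calc 2 ≤ q := hq
        _ = q ^ 1 := (pow_one q).symm
        _ ≤ q ^ t.choose (k - 2) := Nat.pow_le_pow_right (by omega) h1
      have h3 : (defic q k t + 1) / q ^ (t.choose (k - 2)) ≤ (defic q k t + 1) / 2 :=
        Nat.div_le_div_left h2 (by norm_num)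
      omega

lemma defic_zero_of_le (q k : ℕ) (hq : 2 ≤ q) (hk : 2 ≤ k) :
    ∀ t, k ≤ t → defic q k t = 0 := by
  intro t
  induction t with
  | zero => omega
  | succ t ih =>
    intro ht
    show (defic q k t + 1) / q ^ (t.choose (k - 2)) = 0
    apply Nat.div_eq_of_lt
    by_cases h : k ≤ t
    · rw [ih h]
      have h1 : 0 < t.choose (k - 2) := Nat.choose_pos (by omega)
      have : q ^ 1 ≤ q ^ t.choose (k - 2) := Nat.pow_le_pow_right (by omega) h1
      rw [pow_one] at this
      omega
    · have ht' : t = k - 1 := by omega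
      have hc : t.choose (k - 2) = k - 1 := by
        subst ht'
        have h1 : (k - 1).choose ((k - 1) - (k - 2)) = (k - 1).choose (k - 2) :=
          Nat.choose_symm (by omega)
        have h2 : (k - 1) - (k - 2) = 1 := by omega
        rw [h2] at h1
        rw [← h1, Nat.choose_one_right]
      have hd : defic q k t ≤ k - 2 := le_trans (defic_le q k hq t) (min_le_right _ _)
      have h3 : k - 1 < 2 ^ (k - 1) := Nat.lt_two_pow_self
      have h4 : 2 ^ (k - 1) ≤ q ^ (k - 1) := Nat.pow_le_pow_left hq _
      rw [hc]
      omega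

def bexp (k m t : ℕ) : ℕ := ∑ j ∈ Finset.Ico t m, j.choose (k - 2)

lemma bexp_zero (k m : ℕ) (hk : 2 ≤ k) : bexp k m 0 = m.choose (k - 1) := by
  have h : k - 2 + 1 = k - 1 := by omega
  rw [bexp, ← Finset.range_eq_Ico, hockey, h]

lemma bexp_succ (k m t : ℕ) (h : t < m) :
    bexp k m t = t.choose (k - 2) + bexp k m (t + 1) :=
  Finset.sum_eq_sum_Ico_succ_bot h _

lemma bexp_self (k m : ℕ) : bexp k m m = 0 := by simp [bexp]

lemma defic_add_two_le (q k m t : ℕ) (hq : 2 ≤ q) (hk : 2 ≤ k) (hkm : k ≤ m) (ht : t < m) :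
    defic q k t + 2 ≤ q ^ bexp k m t := by
  by_cases hcase : t ≤ k - 1
  · have hterm : (k - 1).choose (k - 2) = k - 1 := by
      have h1 : (k - 1).choose ((k - 1) - (k - 2)) = (k - 1).choose (k - 2) :=
        Nat.choose_symm (by omega)
      have h2 : (k - 1) - (k - 2) = 1 := by omega
      rw [h2] at h1
      rw [← h1, Nat.choose_one_right]
    have h1 : k - 1 ≤ bexp k m t := by
      calc k - 1 = (k - 1).choose (k - 2) := hterm.symm
        _ ≤ bexp k m t := Finset.single_le_sum (f := fun j => Nat.choose j (k - 2))
            (fun _ _ => Nat.zero_le _) (Finset.mem_Ico.mpr (by omega))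
    have h2 : defic q k t ≤ k - 2 := le_trans (defic_le q k hq t) (min_le_right _ _)
    have h3 : k - 1 < 2 ^ (k - 1) := Nat.lt_two_pow_self
    have h4 : 2 ^ (k - 1) ≤ q ^ (k - 1) := Nat.pow_le_pow_left hq _
    have h5 : q ^ (k - 1) ≤ q ^ bexp k m t := Nat.pow_le_pow_right (by omega) h1
    omega
  · have h0 : defic q k t = 0 := defic_zero_of_le q k hq hk t (by omega)
    have h1 : 1 ≤ bexp k m t := by
      calc 1 ≤ t.choose (k - 2) := Nat.choose_pos (by omega)
        _ ≤ bexp k m t := Finset.single_le_sum (f := fun j => Nat.choose j (k - 2))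
            (fun _ _ => Nat.zero_le _) (Finset.mem_Ico.mpr (by omega))
    have h2 : q ^ 1 ≤ q ^ bexp k m t := Nat.pow_le_pow_right (by omega) h1
    rw [pow_one] at h2
    omega

lemma div_step (Q X D : ℕ) (hQ : 1 ≤ Q) (hD : D + 1 ≤ Q * X) :
    X - D / Q ≤ (Q * X - D - 1) / Q + 1 := by
  have ha : Q * (D / Q) + D % Q = D := Nat.div_add_mod D Q
  have hr : D % Q < Q := Nat.mod_lt _ (by omega)
  have haX : D / Q < X := by
    by_contra h
    push_neg at h
    have : Q * X ≤ Q * (D / Q) := Nat.mul_le_mul_left _ h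
    omega
  have hsum : Q * ((X - D / Q - 1) + (D / Q + 1)) = Q * X := by
    congr 1
    omega
  rw [Nat.mul_add, Nat.mul_add, Nat.mul_one] at hsum
  have hkey : Q * X - D - 1 = Q * (X - D / Q - 1) + (Q - D % Q - 1) := by omega
  rw [hkey, Nat.mul_add_div (by omega), Nat.div_eq_of_lt (show Q - D % Q - 1 < Q by omega)]
  omega

lemma two_le_choose (r s : ℕ) (hs : 1 ≤ s) (hsr : s < r) : 2 ≤ r.choose s := by
  obtain ⟨r', rfl⟩ : ∃ r', r = r' + 1 := ⟨r - 1, by omega⟩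
  obtain ⟨s', rfl⟩ : ∃ s', s = s' + 1 := ⟨s - 1, by omega⟩
  rw [Nat.choose_succ_succ']
  have h1 := Nat.choose_pos (show s' ≤ r' by omega)
  have h2 := Nat.choose_pos (show s' + 1 ≤ r' by omega)
  omega


lemma defic_zero' (q k : ℕ) : defic q k 0 = 0 := rfl

lemma defic_succ (q k t : ℕ) :
    defic q k (t + 1) = (defic q k t + 1) / q ^ (t.choose (k - 2)) := rfl

open Finset

lemma step_lemma (r s k n m N : ℕ) (hk : 2 ≤ k) (hkn : k < n) (hkm : k ≤ m)
    (hs : 1 ≤ s) (hsr : s < r)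
    (hN : r.choose s ^ m.choose (k - 1) ≤ N)
    (hm : ∀ χ : Finset (Fin m) → Finset (Fin r),
      IsSetColoring m (k - 1) r s χ → HasMonoClique m (k - 1) (n - 1) r χ) :
    ∀ χ : Finset (Fin N) → Finset (Fin r),
      IsSetColoring N k r s χ →
      HasMonoClique N k n r χ := by
  intro χ hχ
  have hq : 2 ≤ r.choose s := two_le_choose r s hs hsr
  set q : ℕ := r.choose s with hqdef
  have hNpos : 0 < N :=
    lt_of_lt_of_le (Nat.pow_pos (by omega : 0 < q)) hN
  have hus : ∀ (T : Finset (Fin N)) (a : Fin N), T ∪ {a} = insert a T := by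
    intro T a
    ext x
    simp [Finset.mem_union, Finset.mem_insert, or_comm]
  obtain ⟨c₀, -, hc₀⟩ := Finset.exists_subset_card_eq
    (show s ≤ (Finset.univ : Finset (Fin r)).card by simpa using hsr.le)
  have main : ∀ t, t ≤ m →
      ∃ v : ℕ → Fin N, ∃ A : Finset (Fin N),
      (∀ i, i < t → ∀ j, j < t → v i = v j → i = j) ∧
      (∀ i, i < t → v i ∉ A) ∧
      (q ^ bexp k m t - defic q k t ≤ A.card) ∧
      (∀ E : Finset ℕ, E ⊆ Finset.range t → E.card = k - 1 →
        ∀ u₁ u₂ : Fin N,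
          (u₁ ∈ A ∨ ∃ i, i < t ∧ u₁ = v i ∧ ∀ j ∈ E, j < i) →
          (u₂ ∈ A ∨ ∃ i, i < t ∧ u₂ = v i ∧ ∀ j ∈ E, j < i) →
          χ (E.image v ∪ {u₁}) = χ (E.image v ∪ {u₂})) := by
    intro t
    induction t with
    | zero =>
      intro _
      refine ⟨fun _ => ⟨0, hNpos⟩, Finset.univ, by omega, by omega, ?_, ?_⟩
      · rw [bexp_zero k m hk, defic_zero']
        simp only [Finset.card_univ, Fintype.card_fin, Nat.sub_zero]
        exact hN
      · intro E hE hcard u₁ u₂ _ _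
        have : E = ∅ := Finset.subset_empty.mp (by simpa using hE)
        subst this
        simp at hcard
        omega
    | succ t ih =>
      intro htm
      obtain ⟨v, A, hinj, hnm, hcard, hcoh⟩ := ih (by omega)
      have hbig := defic_add_two_le q k m t hq hk hkm (by omega)
      have hA2 : 2 ≤ A.card := by omega
      have hAne : A.Nonempty := Finset.card_pos.mp (by omega)
      obtain ⟨v₀, hv₀⟩ := hAne
      set Q : ℕ := q ^ t.choose (k - 2) with hQdef
      have hQpos : 0 < Q := Nat.pow_pos (by omega)
      let G : Fin N → ({E : Finset (Fin t) // E.card = k - 2} → {cs : Finset (Fin r) // cs.card = s}) :=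
        fun u E₀ =>
          if h : (χ ((E₀.val.image fun i : Fin t => v (i : ℕ)) ∪ {v₀, u})).card = s
          then ⟨_, h⟩ else ⟨c₀, hc₀⟩
      have hYcard : (Finset.univ :
          Finset ({E : Finset (Fin t) // E.card = k - 2} → {cs : Finset (Fin r) // cs.card = s})).card = Q := by
        rw [Finset.card_univ, Fintype.card_fun, Fintype.card_finset_len, Fintype.card_finset_len,
          Fintype.card_fin, Fintype.card_fin]
      set A₁ := A.erase v₀ with hA₁def
      have hA₁card : A₁.card = A.card - 1 := Finset.card_erase_of_mem hv₀
      have hpig : Q * ((A.card - 2) / Q) < A₁.card := by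
        have h1 : Q * ((A.card - 2) / Q) ≤ A.card - 2 := Nat.mul_div_le _ _
        omega
      obtain ⟨y, -, hy⟩ := Finset.exists_lt_card_fiber_of_mul_lt_card_of_maps_to
        (f := G) (s := A₁) (t := Finset.univ) (fun a _ => Finset.mem_univ _)
        (by rw [hYcard]; exact hpig)
      set F := {u ∈ A₁ | G u = y} with hFdef
      have hFsub : F ⊆ A₁ := Finset.filter_subset _ _
      have hFA : F ⊆ A := hFsub.trans (Finset.erase_subset _ _)
      have hFcard : q ^ bexp k m (t + 1) - defic q k (t + 1) ≤ F.card := by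
        have hpow : Q * q ^ bexp k m (t + 1) = q ^ bexp k m t := by
          rw [hQdef, ← pow_add, ← bexp_succ k m t (by omega)]
        have hD : (defic q k t + 1) + 1 ≤ Q * q ^ bexp k m (t + 1) := by
          rw [hpow]; omega
        have h1 := div_step Q (q ^ bexp k m (t + 1)) (defic q k t + 1) (by omega) hD
        rw [← defic_succ q k t] at h1
        have h2 : Q * q ^ bexp k m (t + 1) - (defic q k t + 1) - 1 ≤ A.card - 2 := by
          rw [hpow]; omega
        have h3 := Nat.div_le_div_right (c := Q) h2
        omega
      refine ⟨Function.update v t v₀, F, ?_, ?_, hFcard, ?_⟩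
      · intro i hi j hj hij
        by_cases hit : i = t <;> by_cases hjt : j = t
        · omega
        · subst hit
          rw [Function.update_self, Function.update_of_ne hjt] at hij
          exact absurd (hij ▸ hv₀) (hnm j (by omega))
        · subst hjt
          rw [Function.update_self, Function.update_of_ne hit] at hij
          exact absurd (hij ▸ hv₀) (hnm i (by omega))
        · rw [Function.update_of_ne hit, Function.update_of_ne hjt] at hij
          exact hinj i (by omega) j (by omega) hij
      · intro i hi hiF
        by_cases hit : i = t
        · subst hit
          rw [Function.update_self] at hiF
          exact Finset.notMem_erase v₀ A (hFsub hiF)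
        · rw [Function.update_of_ne hit] at hiF
          exact hnm i (by omega) (hFA hiF)
      · intro E hE hEcard u₁ u₂ h₁ h₂
        have himg : ∀ E₂ : Finset ℕ, (∀ x ∈ E₂, x < t) →
            E₂.image (Function.update v t v₀) = E₂.image v := by
          intro E₂ hsub
          apply Finset.image_congr
          intro x hx
          exact Function.update_of_ne (by have := hsub x hx; omega) _ _
        by_cases hT : t ∈ E
        · have hgood : ∀ u : Fin N,
              (u ∈ F ∨ ∃ i, i < t + 1 ∧ u = Function.update v t v₀ i ∧ ∀ j ∈ E, j < i) →
              u ∈ F := by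
            rintro u (h | ⟨i, hi, rfl, hlt⟩)
            · exact h
            · exact absurd (hlt t hT) (by omega)
          have hu₁ := hgood u₁ h₁
          have hu₂ := hgood u₂ h₂
          set E₀ := E.erase t with hE₀def
          have hE₀lt : ∀ x ∈ E₀, x < t := by
            intro x hx
            have hxE : x ∈ E := Finset.mem_of_mem_erase hx
            have hxt : x ≠ t := Finset.ne_of_mem_erase hx
            have := Finset.mem_range.mp (hE hxE)
            omega
          have hE₀card : E₀.card = k - 2 := by
            rw [hE₀def, Finset.card_erase_of_mem hT, hEcard]
            omega
          set E₀' := E₀.attachFin hE₀lt with hE₀'def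
          have hE₀'card : E₀'.card = k - 2 := by
            rw [hE₀'def, Finset.card_attachFin, hE₀card]
          have himgE₀ : E₀'.image (fun i : Fin t => v (i : ℕ)) = E₀.image v := by
            ext a
            simp only [Finset.mem_image]
            constructor
            · rintro ⟨i, hi, rfl⟩
              exact ⟨(i : ℕ), (Finset.mem_attachFin _).mp hi, rfl⟩
            · rintro ⟨x, hx, rfl⟩
              exact ⟨⟨x, hE₀lt x hx⟩, (Finset.mem_attachFin _).mpr hx, rfl⟩
          have hEdec : ∀ u : Fin N, E.image (Function.update v t v₀) ∪ {u}
              = (E₀'.image fun i : Fin t => v (i : ℕ)) ∪ {v₀, u} := by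
            intro u
            rw [himgE₀]
            have hEi : E = insert t E₀ := (Finset.insert_erase hT).symm
            rw [hEi, Finset.image_insert, Function.update_self, himg E₀ hE₀lt]
            ext a
            simp only [Finset.mem_union, Finset.mem_insert, Finset.mem_singleton]
            tauto
          have hkey : ∀ u ∈ F, χ (E.image (Function.update v t v₀) ∪ {u})
              = (y ⟨E₀', hE₀'card⟩ : Finset (Fin r)) := by
            intro u huF
            have hGu : G u = y := (Finset.mem_filter.mp huF).2
            have huA : u ∈ A := hFA huF
            have huv₀ : u ≠ v₀ := Finset.ne_of_mem_erase (hFsub huF)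
            have himgcard : (E₀.image v).card = k - 2 := by
              rw [Finset.card_image_of_injOn, hE₀card]
              intro x hx y' hy' hxy
              exact hinj x (hE₀lt x hx) y' (hE₀lt y' hy') hxy
            have hv₀nm : v₀ ∉ E₀.image v := by
              simp only [Finset.mem_image]
              rintro ⟨x, hx, hveq⟩
              exact hnm x (hE₀lt x hx) (hveq ▸ hv₀)
            have hunm : u ∉ E₀.image v := by
              simp only [Finset.mem_image]
              rintro ⟨x, hx, hveq⟩
              exact hnm x (hE₀lt x hx) (hveq ▸ huA)
            have hcardedge : ((E₀'.image fun i : Fin t => v (i : ℕ)) ∪ {v₀, u}).card = k := by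
              rw [himgE₀, Finset.card_union_of_disjoint, himgcard, Finset.card_pair (Ne.symm huv₀)]
              · omega
              · rw [Finset.disjoint_right]
                intro a ha
                rcases Finset.mem_insert.mp ha with rfl | ha'
                · exact hv₀nm
                · rw [Finset.mem_singleton] at ha'
                  subst ha'
                  exact hunm
            have hscard : (χ ((E₀'.image fun i : Fin t => v (i : ℕ)) ∪ {v₀, u})).card = s :=
              hχ _ hcardedge
            have hGval : (G u ⟨E₀', hE₀'card⟩ : Finset (Fin r))
                = χ ((E₀'.image fun i : Fin t => v (i : ℕ)) ∪ {v₀, u}) := by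
              simp only [G, dif_pos hscard]
            rw [hEdec u, ← hGval, hGu]
          rw [hkey u₁ hu₁, hkey u₂ hu₂]
        · have hElt : ∀ x ∈ E, x < t := by
            intro x hx
            have h1 := Finset.mem_range.mp (hE hx)
            have h2 : x ≠ t := fun h => hT (h ▸ hx)
            omega
          have hEsub : E ⊆ Finset.range t := fun x hx => Finset.mem_range.mpr (hElt x hx)
          have htrans : ∀ u : Fin N,
              (u ∈ F ∨ ∃ i, i < t + 1 ∧ u = Function.update v t v₀ i ∧ ∀ j ∈ E, j < i) →
              (u ∈ A ∨ ∃ i, i < t ∧ u = v i ∧ ∀ j ∈ E, j < i) := by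
            rintro u (h | ⟨i, hi, rfl, hlt⟩)
            · exact Or.inl (hFA h)
            · by_cases hit : i = t
              · subst hit
                rw [Function.update_self]
                exact Or.inl hv₀
              · rw [Function.update_of_ne hit]
                exact Or.inr ⟨i, by omega, rfl, hlt⟩
          rw [himg E hElt]
          exact hcoh E hEsub hEcard u₁ u₂ (htrans u₁ h₁) (htrans u₂ h₂)
  obtain ⟨v, A, hinj, hnm, hcard, hcoh⟩ := main m le_rfl
  have hAne : A.Nonempty := by
    rw [bexp_self, defic_zero_of_le q k hq hk m hkm, pow_zero] at hcard
    exact Finset.card_pos.mp (by omega)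
  obtain ⟨w, hw⟩ := hAne
  have hvinj : Function.Injective (fun i : Fin m => v (i : ℕ)) := by
    intro a b h
    exact Fin.ext (hinj _ a.isLt _ b.isLt h)
  have hwim : ∀ T : Finset (Fin m), w ∉ T.image (fun i : Fin m => v (i : ℕ)) := by
    intro T h
    simp only [Finset.mem_image] at h
    obtain ⟨i, -, hi⟩ := h
    exact hnm _ i.isLt (hi ▸ hw)
  set χ' : Finset (Fin m) → Finset (Fin r) :=
    fun E => χ ((E.image fun i : Fin m => v (i : ℕ)) ∪ {w}) with hχ'def
  have hχ'col : IsSetColoring m (k - 1) r s χ' := by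
    intro E hE
    apply hχ
    rw [Finset.card_union_of_disjoint (by simp [hwim E]),
      Finset.card_image_of_injective _ hvinj, hE, Finset.card_singleton]
    omega
  obtain ⟨S', hS'card, c, hc⟩ := hm χ' hχ'col
  refine ⟨insert w (S'.image fun i : Fin m => v (i : ℕ)), ?_, c, ?_⟩
  · rw [Finset.card_insert_of_notMem (hwim S'), Finset.card_image_of_injective _ hvinj, hS'card]
    omega
  · intro e hesub hecard
    by_cases hwe : w ∈ e
    · have h1 : e.erase w ⊆ S'.image (fun i : Fin m => v (i : ℕ)) := by
        intro x hx
        rcases Finset.mem_insert.mp (hesub (Finset.mem_of_mem_erase hx)) with h | h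
        · exact absurd h (Finset.ne_of_mem_erase hx)
        · exact h
      obtain ⟨E', hE'sub, hE'img⟩ := Finset.subset_image_iff.mp h1
      have hE'card : E'.card = k - 1 := by
        have h2 : (E'.image fun i : Fin m => v (i : ℕ)).card = E'.card :=
          Finset.card_image_of_injective _ hvinj
        rw [hE'img, Finset.card_erase_of_mem hwe, hecard] at h2
        omega
      have hcm : c ∈ χ' E' := hc E' hE'sub hE'card
      have heq : (E'.image fun i : Fin m => v (i : ℕ)) ∪ {w} = e := by
        rw [hE'img, hus, Finset.insert_erase hwe]
      simp only [hχ'def] at hcm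
      rwa [heq] at hcm
    · have h1 : e ⊆ S'.image (fun i : Fin m => v (i : ℕ)) := by
        intro x hx
        rcases Finset.mem_insert.mp (hesub hx) with h | h
        · exact absurd (h ▸ hx) hwe
        · exact h
      obtain ⟨E, hEsub, hEimg⟩ := Finset.subset_image_iff.mp h1
      have hEcard : E.card = k := by
        have h2 : (E.image fun i : Fin m => v (i : ℕ)).card = E.card :=
          Finset.card_image_of_injective _ hvinj
        rw [hEimg, hecard] at h2
        omega
      have hEne : E.Nonempty := Finset.card_pos.mp (by omega)
      set i := E.max' hEne with hidef
      have hiE : i ∈ E := E.max'_mem hEne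
      set E' := E.erase i with hE'def
      have hE'card : E'.card = k - 1 := by
        rw [hE'def, Finset.card_erase_of_mem hiE, hEcard]
      have hE'sub : E' ⊆ S' := (Finset.erase_subset _ _).trans hEsub
      have hcm : c ∈ χ' E' := hc E' hE'sub hE'card
      set Evals := E'.image (fun j : Fin m => (j : ℕ)) with hEvalsdef
      have hEvalssub : Evals ⊆ Finset.range m := by
        intro x hx
        simp only [hEvalsdef, Finset.mem_image] at hx
        obtain ⟨j, -, rfl⟩ := hx
        exact Finset.mem_range.mpr j.isLt
      have hEvalscard : Evals.card = k - 1 := by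
        rw [hEvalsdef, Finset.card_image_of_injective _ Fin.val_injective, hE'card]
      have hgood1 : ∀ j ∈ Evals, j < (i : ℕ) := by
        intro j hj
        simp only [hEvalsdef, Finset.mem_image] at hj
        obtain ⟨j', hj', rfl⟩ := hj
        have hne : j' ≠ i := Finset.ne_of_mem_erase hj'
        have hle : j' ≤ i := E.le_max' j' (Finset.mem_of_mem_erase hj')
        exact lt_of_le_of_ne (Fin.le_iff_val_le_val.mp hle) (fun h => hne (Fin.ext h))
      have hswap := hcoh Evals hEvalssub hEvalscard (v (i : ℕ)) w
        (Or.inr ⟨(i : ℕ), i.isLt, rfl, hgood1⟩) (Or.inl hw)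
      have himg2 : Evals.image v = E'.image (fun j : Fin m => v (j : ℕ)) := by
        rw [hEvalsdef, Finset.image_image]
        rfl
      have he1 : Evals.image v ∪ {v (i : ℕ)} = e := by
        rw [himg2, hus]
        calc insert (v (i : ℕ)) (E'.image fun j : Fin m => v (j : ℕ))
            = (insert i E').image (fun j : Fin m => v (j : ℕ)) :=
              (Finset.image_insert _ i E').symm
          _ = E.image (fun j : Fin m => v (j : ℕ)) := by
              rw [hE'def, Finset.insert_erase hiE]
          _ = e := hEimg
      simp only [hχ'def] at hcm
      rw [← himg2, ← hswap, he1] at hcm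
      exact hcm

lemma base_case (r s n' : ℕ) (hs : 1 ≤ s) (hr : 1 ≤ r) :
    ∀ χ : Finset (Fin (r * n' + 1)) → Finset (Fin r),
      IsSetColoring (r * n' + 1) 1 r s χ → HasMonoClique (r * n' + 1) 1 n' r χ := by
  intro χ hχ
  classical
  let f : Fin (r * n' + 1) → Fin r := fun x =>
    if h : (χ {x}).Nonempty then h.choose else ⟨0, hr⟩
  obtain ⟨c, -, hc⟩ := Finset.exists_lt_card_fiber_of_mul_lt_card_of_maps_to
    (s := (Finset.univ : Finset (Fin (r * n' + 1)))) (t := (Finset.univ : Finset (Fin r)))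
    (f := f) (n := n') (fun a _ => Finset.mem_univ _)
    (by simp only [Finset.card_univ, Fintype.card_fin]; omega)
  obtain ⟨S, hSsub, hScard⟩ := Finset.exists_subset_card_eq (le_of_lt hc)
  refine ⟨S, hScard, c, ?_⟩
  intro e hesub hecard
  obtain ⟨x, rfl⟩ := Finset.card_eq_one.mp hecard
  have hx : x ∈ S := hesub (Finset.mem_singleton_self x)
  have hxf : f x = c := (Finset.mem_filter.mp (hSsub hx)).2
  have hne : (χ {x}).Nonempty := by
    rw [← Finset.card_pos, hχ {x} (Finset.card_singleton x)]
    omega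
  have hfx : f x ∈ χ {x} := by
    simp only [f, dif_pos hne]
    exact hne.choose_spec
  rwa [hxf] at hfx

lemma mem_lower (r s k' n' N : ℕ) (hsr : s ≤ r)
    (h : ∀ χ : Finset (Fin N) → Finset (Fin r),
      IsSetColoring N k' r s χ → HasMonoClique N k' n' r χ) :
    n' ≤ N := by
  obtain ⟨c₀, -, hc₀⟩ := Finset.exists_subset_card_eq
    (show s ≤ (Finset.univ : Finset (Fin r)).card by simpa using hsr)
  obtain ⟨S, hScard, -⟩ := h (fun _ => c₀) (fun _ _ => hc₀)
  calc n' = S.card := hScard.symm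
    _ ≤ (Finset.univ : Finset (Fin N)).card := Finset.card_le_univ S
    _ = N := by simp

lemma ramsey_exists (r s : ℕ) (hs : 1 ≤ s) (hsr : s < r) :
    ∀ k', 1 ≤ k' → ∀ n', k' < n' →
      {N | ∀ χ : Finset (Fin N) → Finset (Fin r),
        IsSetColoring N k' r s χ → HasMonoClique N k' n' r χ}.Nonempty := by
  intro k'
  induction k' with
  | zero => omega
  | succ k' ih =>
    intro _ n' hn'
    by_cases hk1 : k' = 0
    · subst hk1
      exact ⟨r * n' + 1, base_case r s n' hs (by omega)⟩
    · have hne := ih (by omega) (n' - 1) (by omega)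
      have hmem := Nat.sInf_mem hne
      set m' := sInf {N | ∀ χ : Finset (Fin N) → Finset (Fin r),
        IsSetColoring N k' r s χ → HasMonoClique N k' (n' - 1) r χ} with hm'def
      have hlow : n' - 1 ≤ m' := mem_lower r s k' (n' - 1) m' (le_of_lt hsr) hmem
      refine ⟨r.choose s ^ m'.choose k', ?_⟩
      have := step_lemma r s (k' + 1) n' m' (r.choose s ^ m'.choose k')
        (by omega) (by omega) (by omega) hs hsr
        le_rfl hmem
      exact this


end ErdosRadoAux

/-- Theorem 5: the Erdős–Rado-type upper bound for hypergraphs. -/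
theorem set_ramsey_hypergraph_upper (n k r s : ℕ) (hk : 3 ≤ k) (hnk : k < n)
    (hs : 1 ≤ s) (hsr : s < r) :
    setRamsey k n r s ≤
      (r.choose s) ^ ((setRamsey (k - 1) (n - 1) r s).choose (k - 1)) := by
  have hne := ErdosRadoAux.ramsey_exists r s hs hsr (k - 1) (by omega) (n - 1) (by omega)
  have hmem := Nat.sInf_mem hne
  have hmem' : ∀ χ : Finset (Fin (setRamsey (k - 1) (n - 1) r s)) → Finset (Fin r),
      IsSetColoring (setRamsey (k - 1) (n - 1) r s) (k - 1) r s χ →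
      HasMonoClique (setRamsey (k - 1) (n - 1) r s) (k - 1) (n - 1) r χ := hmem
  have hlow : n - 1 ≤ setRamsey (k - 1) (n - 1) r s :=
    ErdosRadoAux.mem_lower r s (k - 1) (n - 1) _ (le_of_lt hsr) hmem'
  apply Nat.sInf_le
  exact ErdosRadoAux.step_lemma r s k n (setRamsey (k - 1) (n - 1) r s)
    ((r.choose s) ^ ((setRamsey (k - 1) (n - 1) r s).choose (k - 1)))
    (by omega) hnk (by omega) hs hsr le_rfl hmem'
end
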